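/- arXiv:2304.06933 — 4 statements merged into one kernel-verified Lean document; each statement's English description precedes it below -/
import Mathlib

section
/- Let ϱ ∈ (0,1/8] be such that k(v,u) ≤ C k_ϱ(v,u) for all v ≠ u. Then for every θ̃ with 0 < θ̃ < 2ϱ and every ϱ̃ with 0 < ϱ̃ < ϱ − θ̃/2, there is a constant C′ such that k(v,u) · e^{θ̃|v|²}/e^{θ̃|u|²} ≤ C′ k_{ϱ̃}(v,u) = C′ e^{−ϱ̃|v−u|²}/|v−u| for all u, v ∈ ℝ³ with u ≠ v. -/
noncomputable section

open Real MeasureTheory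
open scoped RealInnerProductSpace ENNReal

abbrev E3 : Type := EuclideanSpace ℝ (Fin 3)

/-- The domain `Ω = {ξ < 0}`. -/
def Omega (ξ : E3 → ℝ) : Set E3 := {x | ξ x < 0}

/-- The boundary `∂Ω = {ξ = 0}`. -/
def Bdry (ξ : E3 → ℝ) : Set E3 := {x | ξ x = 0}

/-- Outward unit normal `n(x) = ∇ξ(x)/|∇ξ(x)|`. -/
def nrml (ξ : E3 → ℝ) (x : E3) : E3 := ‖gradient ξ x‖⁻¹ • gradient ξ x

/-- Standing domain hypotheses: `ξ` is `C^k`, `Ω` is bounded, open (automatic),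
nonempty, `∇ξ ≠ 0` on the boundary, and the domain is strictly convex. -/
def IsConvexDomain (ξ : E3 → ℝ) (k : ℕ) : Prop :=
  ContDiff ℝ k ξ ∧ Bornology.IsBounded (Omega ξ) ∧ (Omega ξ).Nonempty ∧
    (∀ x ∈ Bdry ξ, gradient ξ x ≠ 0) ∧
    ∃ c > (0:ℝ), ∀ x ∈ closure (Omega ξ), ∀ ζ : E3,
      c * ‖ζ‖ ^ 2 ≤ ⟪ζ, fderiv ℝ (gradient ξ) x ζ⟫

/-- Backward exit time `t_b(x,v)`. -/
def tb (ξ : E3 → ℝ) (x v : E3) : ℝ := sSup {s : ℝ | 0 < s ∧ x - s • v ∈ Omega ξ}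

/-- Backward exit position `x_b(x,v) = x - t_b(x,v) v`. -/
def xb (ξ : E3 → ℝ) (x v : E3) : E3 := x - tb ξ x v • v

/-- Forward exit time `t_f(x,v)`. -/
def tfwd (ξ : E3 → ℝ) (x v : E3) : ℝ := sSup {s : ℝ | 0 < s ∧ x + s • v ∈ Omega ξ}

/-- `α̃(x,v) = (|v·∇ξ(x)|² − 2ξ(x)(v·∇²ξ(x)·v))^{1/2}`. -/
def alphaT (ξ : E3 → ℝ) (x v : E3) : ℝ :=
  Real.sqrt (⟪v, gradient ξ x⟫ ^ 2 - 2 * ξ x * ⟪v, fderiv ℝ (gradient ξ) x v⟫)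

/-- The cutoff function `χ`. -/
structure IsKineticCutoff (χ : ℝ → ℝ) : Prop where
  smooth : ContDiff ℝ (⊤ : ℕ∞) χ
  mono : Monotone χ
  nonneg : ∀ s : ℝ, 0 ≤ s → 0 ≤ χ s
  eq_id : ∀ s ∈ Set.Icc (0:ℝ) (1/2), χ s = s
  eq_one : ∀ s : ℝ, 2 ≤ s → χ s = 1
  deriv_le : ∀ s : ℝ, |deriv χ s| ≤ 1

/-- The kinetic distance `α(x,v) = χ(α̃(x,v))`. -/
def kinDist (ξ : E3 → ℝ) (χ : ℝ → ℝ) (x v : E3) : ℝ := χ (alphaT ξ x v)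

/-- The global Maxwellian `μ(v) = (2π)⁻¹ e^{-|v|²/2}`. -/
def Maxw (v : E3) : ℝ := (2 * π)⁻¹ * Real.exp (-‖v‖ ^ 2 / 2)

/-- The wall Maxwellian `M_W(x,v) = (2π T_W(x)²)⁻¹ e^{-|v|²/(2 T_W(x))}`. -/
def wallMaxw (T : E3 → ℝ) (x v : E3) : ℝ :=
  (2 * π * (T x) ^ 2)⁻¹ * Real.exp (-‖v‖ ^ 2 / (2 * T x))

/-- The hard-sphere Boltzmann collision operator. -/
def Qcol (F₁ F₂ : E3 → ℝ) (v : E3) : ℝ :=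
  ∫ u : E3, ∫ ω in Metric.sphere (0 : E3) 1,
    |⟪v - u, ω⟫| *
      (F₁ (u + ⟪v - u, ω⟫ • ω) * F₂ (v - ⟪v - u, ω⟫ • ω) - F₁ u * F₂ v) ∂μH[2]

/-- The hard-sphere collision frequency `ν(v)`. -/
def nuColl (v : E3) : ℝ :=
  ∫ u : E3, ∫ ω in Metric.sphere (0 : E3) 1, |⟪v - u, ω⟫| * Maxw u ∂μH[2]

/-- The nonlinear Boltzmann operator `Γ(f,g) = μ^{-1/2} Q(√μ f, √μ g)`. -/
def GammaOp (f g : E3 → ℝ) (v : E3) : ℝ :=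
  (Real.sqrt (Maxw v))⁻¹ *
    Qcol (fun u => Real.sqrt (Maxw u) * f u) (fun u => Real.sqrt (Maxw u) * g u) v

/-- The linearized collision operator `L f = -μ^{-1/2}[Q(μ,√μ f) + Q(√μ f,μ)]`. -/
def LOp (f : E3 → ℝ) (v : E3) : ℝ :=
  -((Real.sqrt (Maxw v))⁻¹ *
    (Qcol Maxw (fun u => Real.sqrt (Maxw u) * f u) v +
      Qcol (fun u => Real.sqrt (Maxw u) * f u) Maxw v))

/-- The compact part `K f = ν f - L f`. -/
def KOp (f : E3 → ℝ) (v : E3) : ℝ := nuColl v * f v - LOp f v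

/-- The grazing set `γ₀`. -/
def grazing (ξ : E3 → ℝ) : Set (E3 × E3) :=
  {p | p.1 ∈ Bdry ξ ∧ ⟪nrml ξ p.1, p.2⟫ = 0}

/-- Steady solution of the Boltzmann equation with diffuse reflection boundary condition. -/
def IsSteadySolution (ξ T : E3 → ℝ) (F : E3 → E3 → ℝ) : Prop :=
  (∀ x ∈ Omega ξ, ∀ v : E3,
      ⟪v, gradient (fun y => F y v) x⟫ = Qcol (F x) (F x) v) ∧
  (∀ x ∈ Bdry ξ, ∀ v : E3, ⟪nrml ξ x, v⟫ < 0 →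
      F x v = wallMaxw T x v *
        ∫ u in {u : E3 | 0 < ⟪nrml ξ x, u⟫}, F x u * ⟪nrml ξ x, u⟫)

/-- Diffuse reflection boundary condition for the perturbation. -/
def diffuseBC (ξ T : E3 → ℝ) (g : E3 → E3 → ℝ) : Prop :=
  ∀ x ∈ Bdry ξ, ∀ v : E3, ⟪nrml ξ x, v⟫ < 0 →
    g x v = wallMaxw T x v / Real.sqrt (Maxw v) *
      ∫ u in {u : E3 | 0 < ⟪nrml ξ x, u⟫}, g x u * Real.sqrt (Maxw u) * ⟪nrml ξ x, u⟫

/-- Solution of the perturbed dynamical Boltzmann equation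
`∂_t f + v·∇_x f + ν f = K f + Γ(f_s,f) + Γ(f,f_s) + Γ(f,f)` with diffuse reflection
boundary condition and initial datum `f₀`. -/
def IsDynSolution (ξ T : E3 → ℝ) (fs f₀ : E3 → E3 → ℝ) (f : ℝ → E3 → E3 → ℝ) : Prop :=
  (∀ t > (0:ℝ), ∀ x ∈ Omega ξ, ∀ v : E3,
    deriv (fun s => f s x v) t + ⟪v, gradient (fun y => f t y v) x⟫ +
        nuColl v * f t x v
      = KOp (f t x) v + GammaOp (fs x) (f t x) v + GammaOp (f t x) (fs x) v +
        GammaOp (f t x) (f t x) v) ∧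
  (∀ t > (0:ℝ), diffuseBC ξ T (f t)) ∧
  (∀ x v, f 0 x v = f₀ x v)

/-- The initial temporal derivative
`∂_t f(0) = -v·∇_x f₀ - L f₀ + Γ(f_s,f₀) + Γ(f₀,f_s) + Γ(f₀,f₀)`. -/
def dtInit (fs f₀ : E3 → E3 → ℝ) (x v : E3) : ℝ :=
  -⟪v, gradient (fun y => f₀ y v) x⟫ - LOp (f₀ x) v + GammaOp (fs x) (f₀ x) v +
    GammaOp (f₀ x) (fs x) v + GammaOp (f₀ x) (f₀ x) v
/-- Grad kernel part `k₁`. -/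
def kOne (C₁ : ℝ) (v u : E3) : ℝ := C₁ * ‖u - v‖ * Real.exp (-(‖v‖ ^ 2 + ‖u‖ ^ 2) / 4)

/-- Grad kernel part `k₂`. -/
def kTwo (C₂ : ℝ) (v u : E3) : ℝ :=
  C₂ * ‖u - v‖⁻¹ *
    Real.exp (-‖u - v‖ ^ 2 / 8 - (‖u‖ ^ 2 - ‖v‖ ^ 2) ^ 2 / (8 * ‖u - v‖ ^ 2))

/-- The Grad hard-sphere kernel `k = k₁ + k₂`. -/
def kGrad (C₁ C₂ : ℝ) (v u : E3) : ℝ := kOne C₁ v u + kTwo C₂ v u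

/-- `k_ϱ(v,u) = e^{-ϱ|v-u|²}/|v-u|`. -/
def kRho (ϱ : ℝ) (v u : E3) : ℝ := Real.exp (-ϱ * ‖v - u‖ ^ 2) / ‖v - u‖


private lemma exp_sq_bound {δ r : ℝ} (hδ : 0 < δ) (hr : 0 < r) :
    r * Real.exp (-(δ * r ^ 2)) ≤ 1 / (δ * r) := by
  have h1 : δ * r ^ 2 ≤ Real.exp (δ * r ^ 2) := by
    have := Real.add_one_le_exp (δ * r ^ 2); linarith
  have h2 : (0:ℝ) < Real.exp (δ * r ^ 2) := Real.exp_pos _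
  rw [Real.exp_neg, div_eq_inv_mul, mul_one]
  have h3 : (Real.exp (δ * r ^ 2))⁻¹ ≤ (δ * r ^ 2)⁻¹ :=
    inv_anti₀ (by positivity) h1
  calc r * (Real.exp (δ * r ^ 2))⁻¹ ≤ r * (δ * r ^ 2)⁻¹ :=
        mul_le_mul_of_nonneg_left h3 hr.le
    _ = (δ * r)⁻¹ := by field_simp

private lemma k1_bound {C₁ θt ϱt A B r : ℝ} (hC₁ : 0 < C₁) (hθ0 : 0 < θt)
    (hθ4 : θt < 1/4) (hϱt0 : 0 < ϱt) (hδ : 0 < 1/8 - θt/2 - ϱt)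
    (hA0 : 0 ≤ A) (hB0 : 0 ≤ B) (hr : 0 < r) (hr2 : r ^ 2 ≤ 2 * (A + B)) :
    C₁ * r * Real.exp (-(A + B) / 4) * (Real.exp (θt * A) / Real.exp (θt * B))
      ≤ (C₁ / (1/8 - θt/2 - ϱt)) * (Real.exp (-ϱt * r ^ 2) / r) := by
  set δ : ℝ := 1/8 - θt/2 - ϱt with hδdef
  rw [div_eq_mul_inv (Real.exp _), ← Real.exp_neg, ← Real.exp_add]
  have he : Real.exp (-(A + B) / 4 + (θt * A + -(θt * B)))
      ≤ Real.exp (-(δ * r ^ 2)) * Real.exp (-ϱt * r ^ 2) := by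
    rw [← Real.exp_add, Real.exp_le_exp]
    have hθB : 0 ≤ θt * B := by positivity
    have hkey : (1/4 - θt) * r ^ 2 ≤ (1/4 - θt) * (2 * (A + B)) :=
      mul_le_mul_of_nonneg_left hr2 (by linarith)
    simp only [hδdef]; nlinarith
  calc C₁ * r * Real.exp (-(A + B) / 4) * Real.exp (θt * A + -(θt * B))
      = C₁ * r * Real.exp (-(A + B) / 4 + (θt * A + -(θt * B))) := by
        rw [mul_assoc, ← Real.exp_add]
    _ ≤ C₁ * r * (Real.exp (-(δ * r ^ 2)) * Real.exp (-ϱt * r ^ 2)) :=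
        mul_le_mul_of_nonneg_left he (by positivity)
    _ = C₁ * (r * Real.exp (-(δ * r ^ 2))) * Real.exp (-ϱt * r ^ 2) := by ring
    _ ≤ C₁ * (1 / (δ * r)) * Real.exp (-ϱt * r ^ 2) := by
        apply mul_le_mul_of_nonneg_right _ (Real.exp_pos _).le
        exact mul_le_mul_of_nonneg_left (exp_sq_bound hδ hr) hC₁.le
    _ = (C₁ / δ) * (Real.exp (-ϱt * r ^ 2) / r) := by field_simp

private lemma k2_bound {C₂ θt ϱt A B r : ℝ} (hC₂ : 0 < C₂) (hθ0 : 0 < θt)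
    (hθ4 : θt < 1/4) (hϱt0 : 0 < ϱt) (hsum : ϱt ≤ 1/8 - θt/2) (hr : 0 < r) :
    C₂ * r⁻¹ * Real.exp (-r ^ 2 / 8 - (B - A) ^ 2 / (8 * r ^ 2)) *
        (Real.exp (θt * A) / Real.exp (θt * B))
      ≤ C₂ * (Real.exp (-ϱt * r ^ 2) / r) := by
  set a : ℝ := B - A with ha
  rw [div_eq_mul_inv (Real.exp _), ← Real.exp_neg, ← Real.exp_add]
  have h8 : (0:ℝ) < 8 * r ^ 2 := by positivity
  have hquad : θt * (-a) - 2 * θt ^ 2 * r ^ 2 ≤ a ^ 2 / (8 * r ^ 2) := by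
    rw [le_div_iff₀ h8]
    nlinarith [sq_nonneg (a + 4 * θt * r ^ 2)]
  have hθθ : 2 * θt ^ 2 ≤ θt / 2 := by nlinarith
  have he : Real.exp (-r ^ 2 / 8 - a ^ 2 / (8 * r ^ 2) + (θt * A + -(θt * B)))
      ≤ Real.exp (-ϱt * r ^ 2) := by
    rw [Real.exp_le_exp]
    have hrr : 0 ≤ r ^ 2 := sq_nonneg r
    have hAB : θt * A + -(θt * B) = θt * (-a) := by rw [ha]; ring
    nlinarith
  calc C₂ * r⁻¹ * Real.exp (-r ^ 2 / 8 - a ^ 2 / (8 * r ^ 2)) *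
        Real.exp (θt * A + -(θt * B))
      = C₂ * r⁻¹ * Real.exp (-r ^ 2 / 8 - a ^ 2 / (8 * r ^ 2) + (θt * A + -(θt * B))) := by
        rw [mul_assoc, ← Real.exp_add]
    _ ≤ C₂ * r⁻¹ * Real.exp (-ϱt * r ^ 2) :=
        mul_le_mul_of_nonneg_left he (by positivity)
    _ = C₂ * (Real.exp (-ϱt * r ^ 2) / r) := by rw [div_eq_inv_mul]; ring

theorem stmt6 (C₁ C₂ : ℝ) (hC₁ : 0 < C₁) (hC₂ : 0 < C₂)
    (ϱ : ℝ) (hϱ : ϱ ∈ Set.Ioc (0:ℝ) (1/8)) (C : ℝ)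
    (hk : ∀ v u : E3, v ≠ u → kGrad C₁ C₂ v u ≤ C * kRho ϱ v u)
    (θt : ℝ) (hθt0 : 0 < θt) (hθt : θt < 2 * ϱ)
    (ϱt : ℝ) (hϱt0 : 0 < ϱt) (hϱt : ϱt < ϱ - θt / 2) :
    ∃ C' : ℝ, ∀ u v : E3, u ≠ v →
      kGrad C₁ C₂ v u * (Real.exp (θt * ‖v‖ ^ 2) / Real.exp (θt * ‖u‖ ^ 2))
        ≤ C' * kRho ϱt v u := by
  obtain ⟨hϱ0, hϱ8⟩ := hϱ
  have hθ4 : θt < 1/4 := by linarith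
  have hδ : 0 < 1/8 - θt/2 - ϱt := by linarith
  have hsum : ϱt ≤ 1/8 - θt/2 := by linarith
  refine ⟨C₁ / (1/8 - θt/2 - ϱt) + C₂, fun u v huv => ?_⟩
  have hr : 0 < ‖u - v‖ := by rw [norm_pos_iff, sub_ne_zero]; exact huv
  have hr2 : ‖u - v‖ ^ 2 ≤ 2 * (‖v‖ ^ 2 + ‖u‖ ^ 2) := by
    have h2 : ‖u - v‖ ≤ ‖u‖ + ‖v‖ := norm_sub_le u v
    nlinarith [norm_nonneg u, norm_nonneg v, norm_nonneg (u - v),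
      sq_nonneg (‖u‖ - ‖v‖)]
  have h1 := k1_bound (A := ‖v‖ ^ 2) (B := ‖u‖ ^ 2) (r := ‖u - v‖)
    hC₁ hθt0 hθ4 hϱt0 hδ (sq_nonneg _) (sq_nonneg _) hr hr2
  have h2 := k2_bound (C₂ := C₂) (A := ‖v‖ ^ 2) (B := ‖u‖ ^ 2) (r := ‖u - v‖)
    hC₂ hθt0 hθ4 hϱt0 hsum hr
  have hrho : kRho ϱt v u = Real.exp (-ϱt * ‖u - v‖ ^ 2) / ‖u - v‖ := by
    unfold kRho; rw [norm_sub_rev]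
  rw [hrho]
  have hgrad : kGrad C₁ C₂ v u * (Real.exp (θt * ‖v‖ ^ 2) / Real.exp (θt * ‖u‖ ^ 2))
      = kOne C₁ v u * (Real.exp (θt * ‖v‖ ^ 2) / Real.exp (θt * ‖u‖ ^ 2)) +
        kTwo C₂ v u * (Real.exp (θt * ‖v‖ ^ 2) / Real.exp (θt * ‖u‖ ^ 2)) := by
    unfold kGrad; ring
  rw [hgrad, add_mul]
  exact add_le_add (by unfold kOne; exact h1) (by unfold kTwo; exact h2)
end
end

section
/- Let ϱ > 0 and 0 < θ̃ < 2ϱ. Then for every ϱ̃ with 0 < ϱ̃ < ϱ − θ̃/2 and all u, v ∈ ℝ³ with u ≠ v, the exponent inequality −ϱ|v−u|² − ϱ(|v|² − |u|²)²/|v−u|² + θ̃|v|² − θ̃|u|² ≤ −ϱ̃|v−u|² holds; equivalently, the quadratic form −(2ϱ + θ̃)|η|² + (4ϱ + 2θ̃)(v·η) − 4ϱ(v·η)²/|η|² in the variables |η| and (v·η)/|η| (with η = v − u) is negative semidefinite up to the −ϱ̃|η|² correction. -/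
noncomputable section

open Real MeasureTheory
open scoped RealInnerProductSpace ENNReal

theorem stmt8 (ϱ θt : ℝ) (hϱ : 0 < ϱ) (hθt0 : 0 < θt) (hθt : θt < 2 * ϱ)
    (ϱt : ℝ) (hϱt0 : 0 < ϱt) (hϱt : ϱt < ϱ - θt / 2)
    (u v : E3) (huv : u ≠ v) :
    -ϱ * ‖v - u‖ ^ 2 - ϱ * (‖v‖ ^ 2 - ‖u‖ ^ 2) ^ 2 / ‖v - u‖ ^ 2 +
        θt * ‖v‖ ^ 2 - θt * ‖u‖ ^ 2
      ≤ -ϱt * ‖v - u‖ ^ 2 := by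
  have hne : v - u ≠ 0 := sub_ne_zero.mpr (Ne.symm huv)
  have ha : (0:ℝ) < ‖v - u‖ ^ 2 := pow_pos (norm_pos_iff.mpr hne) 2
  set a : ℝ := ‖v - u‖ ^ 2 with ha_def
  set b : ℝ := ‖v‖ ^ 2 - ‖u‖ ^ 2 with hb_def
  have hdisc : 0 ≤ 4 * ϱ * (ϱ - ϱt) - θt ^ 2 := by nlinarith [mul_pos hϱ hθt0]
  have key : 0 ≤ (ϱ - ϱt) * a ^ 2 - θt * a * b + ϱ * b ^ 2 := by
    nlinarith [sq_nonneg (2 * ϱ * b - θt * a), mul_nonneg hdisc (sq_nonneg a), hϱ]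
  have hid : -ϱ * a - ϱ * b ^ 2 / a + θt * b - (-ϱt * a)
      = -(((ϱ - ϱt) * a ^ 2 - θt * a * b + ϱ * b ^ 2) / a) := by
    field_simp
    ring
  have hnn := div_nonneg key ha.le
  have hgoal : -ϱ * a - ϱ * b ^ 2 / a + θt * b ≤ -ϱt * a := by linarith
  calc -ϱ * a - ϱ * b ^ 2 / a + θt * ‖v‖ ^ 2 - θt * ‖u‖ ^ 2
      = -ϱ * a - ϱ * b ^ 2 / a + θt * b := by rw [hb_def]; ring
    _ ≤ -ϱt * a := hgoal
end
end

section
/- Let 0 < θ < 1/4 and w(v) = e^{θ|v|²}. For all measurable functions f, g : Ω×ℝ³ → ℝ with ‖wf‖_∞ < ∞ and ‖wg‖_∞ < ∞, the nonlinear Boltzmann operator satisfies the pointwise bound |Γ(f,g)(x,v)| ≤ C ⟨v⟩ w(v)^{−1} ‖wf‖_∞ ‖wg‖_∞ for all (x,v) ∈ Ω×ℝ³, i.e. ‖(w/⟨v⟩)Γ(f,g)‖_∞ ≤ C ‖wf‖_∞ ‖wg‖_∞; the same bound holds with sup norms over ∂Ω×ℝ³ on both sides. -/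
noncomputable section

open Real MeasureTheory
open scoped RealInnerProductSpace ENNReal

lemma gauss_integrable {c : ℝ} (hc : 0 < c) :
    Integrable fun u : E3 => Real.exp (-(c * ‖u‖ ^ 2)) := by
  have h := (GaussianFourier.integrable_cexp_neg_mul_sq_norm_add (V := E3) (b := (c : ℂ))
    (by simpa using hc) 0 (0 : E3)).norm
  refine h.congr (Filter.Eventually.of_forall fun u => ?_)
  simp [Complex.norm_exp, ← Complex.ofReal_pow, neg_mul]

lemma coll_id (u v ω : E3) (hω : ‖ω‖ = 1) :
    ‖u + ⟪v - u, ω⟫ • ω‖ ^ 2 + ‖v - ⟪v - u, ω⟫ • ω‖ ^ 2 = ‖u‖ ^ 2 + ‖v‖ ^ 2 := by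
  set c := ⟪v - u, ω⟫ with hc
  have hcc : c = ⟪v, ω⟫ - ⟪u, ω⟫ := by rw [hc, inner_sub_left]
  have h1 : ‖u + c • ω‖ ^ 2 = ‖u‖ ^ 2 + 2 * (c * ⟪u, ω⟫) + c ^ 2 := by
    rw [norm_add_sq_real, real_inner_smul_right, norm_smul, mul_pow]
    simp [hω, Real.norm_eq_abs, sq_abs]
  have h2 : ‖v - c • ω‖ ^ 2 = ‖v‖ ^ 2 - 2 * (c * ⟪v, ω⟫) + c ^ 2 := by
    rw [norm_sub_sq_real, real_inner_smul_right, norm_smul, mul_pow]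
    simp [hω, Real.norm_eq_abs, sq_abs]
  have h3 : c ^ 2 = c * ⟪v, ω⟫ - c * ⟪u, ω⟫ := by rw [hcc]; ring
  rw [h1, h2]; linarith

def sphMap (p : Fin 2 → ℝ) : E3 :=
  (WithLp.equiv 2 (Fin 3 → ℝ)).symm
    ![Real.cos (p 0) * Real.cos (p 1), Real.cos (p 0) * Real.sin (p 1), Real.sin (p 0)]

lemma sphMap_apply (p : Fin 2 → ℝ) (i : Fin 3) :
    sphMap p i = ![Real.cos (p 0) * Real.cos (p 1), Real.cos (p 0) * Real.sin (p 1),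
      Real.sin (p 0)] i := rfl

lemma sphMap_lip : LipschitzWith 3 sphMap := by
  apply LipschitzWith.of_dist_le_mul
  intro p q
  have h0 : |p 0 - q 0| ≤ dist p q := by rw [← Real.dist_eq]; exact dist_le_pi_dist p q 0
  have h1 : |p 1 - q 1| ≤ dist p q := by rw [← Real.dist_eq]; exact dist_le_pi_dist p q 1
  have hd : (0:ℝ) ≤ dist p q := dist_nonneg
  have lipcos : ∀ s t : ℝ, |Real.cos s - Real.cos t| ≤ |s - t| := fun s t => by
    rw [Real.cos_sub_cos, abs_mul, abs_mul, abs_neg, abs_two]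
    have h1 : |Real.sin ((s - t) / 2)| ≤ |(s - t) / 2| := Real.abs_sin_le_abs
    have h2 : |Real.sin ((s + t) / 2)| ≤ 1 := Real.abs_sin_le_one _
    have h3 : |(s - t) / 2| = |s - t| / 2 := by rw [abs_div, abs_two]
    nlinarith [abs_nonneg (Real.sin ((s + t) / 2)), abs_nonneg (s - t),
      abs_nonneg (Real.sin ((s - t) / 2))]
  have lipsin : ∀ s t : ℝ, |Real.sin s - Real.sin t| ≤ |s - t| := fun s t => by
    rw [Real.sin_sub_sin, abs_mul, abs_mul, abs_two]
    have h1 : |Real.sin ((s - t) / 2)| ≤ |(s - t) / 2| := Real.abs_sin_le_abs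
    have h2 : |Real.cos ((s + t) / 2)| ≤ 1 := Real.abs_cos_le_one _
    have h3 : |(s - t) / 2| = |s - t| / 2 := by rw [abs_div, abs_two]
    nlinarith [abs_nonneg (Real.cos ((s + t) / 2)), abs_nonneg (s - t),
      abs_nonneg (Real.sin ((s - t) / 2))]
  have key : ∀ A B C D : ℝ, |A| ≤ 1 → |B| ≤ 1 → |C| ≤ 1 → |D| ≤ 1 →
      |A - B| ≤ dist p q → |C - D| ≤ dist p q → |A * C - B * D| ≤ 2 * dist p q := by
    intro A B C D hA hB hC hD hAB hCD
    calc |A * C - B * D| = |(A - B) * C + B * (C - D)| := by ring_nf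
      _ ≤ |(A - B) * C| + |B * (C - D)| := abs_add_le _ _
      _ = |A - B| * |C| + |B| * |C - D| := by rw [abs_mul, abs_mul]
      _ ≤ dist p q * 1 + 1 * dist p q := by
          gcongr <;> first | assumption | exact abs_nonneg _
      _ = 2 * dist p q := by ring
  have c0 : |sphMap p 0 - sphMap q 0| ≤ 2 * dist p q := by
    simp only [sphMap_apply, Matrix.cons_val_zero]
    exact key _ _ _ _ (Real.abs_cos_le_one _) (Real.abs_cos_le_one _)
      (Real.abs_cos_le_one _) (Real.abs_cos_le_one _) (lipcos _ _ |>.trans h0)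
      (lipcos _ _ |>.trans h1)
  have c1 : |sphMap p 1 - sphMap q 1| ≤ 2 * dist p q := by
    simp only [sphMap_apply, Matrix.cons_val_one, Matrix.head_cons]
    exact key _ _ _ _ (Real.abs_cos_le_one _) (Real.abs_cos_le_one _)
      (Real.abs_sin_le_one _) (Real.abs_sin_le_one _) (lipcos _ _ |>.trans h0)
      (lipsin _ _ |>.trans h1)
  have c2 : |sphMap p 2 - sphMap q 2| ≤ dist p q := by
    simp only [sphMap_apply]
    exact (lipsin _ _).trans h0
  rw [EuclideanSpace.dist_eq]
  have : Real.sqrt (∑ i, dist (sphMap p i) (sphMap q i) ^ 2) ≤ Real.sqrt ((3 * dist p q) ^ 2) := by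
    apply Real.sqrt_le_sqrt
    rw [Fin.sum_univ_three]
    simp only [Real.dist_eq]
    nlinarith [abs_nonneg (sphMap p 0 - sphMap q 0), abs_nonneg (sphMap p 1 - sphMap q 1),
      abs_nonneg (sphMap p 2 - sphMap q 2), sq_abs (sphMap p 0 - sphMap q 0),
      sq_abs (sphMap p 1 - sphMap q 1), sq_abs (sphMap p 2 - sphMap q 2)]
  refine this.trans_eq ?_
  rw [Real.sqrt_sq (by positivity)]
  norm_num

lemma sphere_subset_image :
    Metric.sphere (0 : E3) 1 ⊆ sphMap '' (Set.univ.pi fun _ : Fin 2 => Set.Icc (-4 : ℝ) 4) := by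
  intro x hx
  have hx1 : ‖x‖ = 1 := by simpa using hx
  have hsum : x 0 ^ 2 + x 1 ^ 2 + x 2 ^ 2 = 1 := by
    have h := hx1
    rw [EuclideanSpace.norm_eq, Real.sqrt_eq_one] at h
    simpa [Fin.sum_univ_three, Real.norm_eq_abs, sq_abs] using h
  have hx2le : -1 ≤ x 2 ∧ x 2 ≤ 1 := by constructor <;> nlinarith
  set a := Real.arcsin (x 2) with ha
  have hsa : Real.sin a = x 2 := Real.sin_arcsin hx2le.1 hx2le.2
  set r := Real.sqrt (x 0 ^ 2 + x 1 ^ 2) with hr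
  have hr0 : 0 ≤ r := Real.sqrt_nonneg _
  have hca : Real.cos a = r := by
    rw [ha, Real.cos_arcsin, hr]; congr 1; nlinarith
  have hamem : a ∈ Set.Icc (-4 : ℝ) 4 := by
    have h1 := Real.neg_pi_div_two_le_arcsin (x 2)
    have h2 := Real.arcsin_le_pi_div_two (x 2)
    have hpi := Real.pi_le_four
    constructor <;> [linarith; linarith]
  by_cases hzero : x 0 ^ 2 + x 1 ^ 2 = 0
  · have h0 : x 0 = 0 := by nlinarith
    have h1 : x 1 = 0 := by nlinarith
    refine ⟨![a, 0], ?_, ?_⟩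
    · intro i _
      fin_cases i
      · simpa using hamem
      · simp only [Matrix.cons_val_one, Matrix.head_cons]
        constructor <;> norm_num
    · refine PiLp.ext fun i => ?_
      have hr' : r = 0 := by rw [hr, hzero, Real.sqrt_zero]
      fin_cases i <;>
        simp [sphMap_apply, hca, hr', hsa, h0, h1]
  · have hrpos : 0 < r := by
      rw [hr]; apply Real.sqrt_pos.2; rcases lt_or_eq_of_le (by positivity : (0:ℝ) ≤ x 0 ^ 2 + x 1 ^ 2) with h | h
      · exact h
      · exact absurd h.symm hzero
    have hr2 : r ^ 2 = x 0 ^ 2 + x 1 ^ 2 := Real.sq_sqrt (by positivity)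
    have ht1 : -1 ≤ x 0 / r := by
      rw [le_div_iff₀ hrpos]; nlinarith
    have ht2 : x 0 / r ≤ 1 := by
      rw [div_le_iff₀ hrpos]; nlinarith
    set b := if 0 ≤ x 1 then Real.arccos (x 0 / r) else -Real.arccos (x 0 / r) with hb
    have hcb : Real.cos b = x 0 / r := by
      rw [hb]; split_ifs with h
      · exact Real.cos_arccos ht1 ht2
      · rw [Real.cos_neg]; exact Real.cos_arccos ht1 ht2
    have hsinarccos : Real.sin (Real.arccos (x 0 / r)) = |x 1| / r := by
      rw [Real.sin_arccos]
      have : 1 - (x 0 / r) ^ 2 = x 1 ^ 2 / r ^ 2 := by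
        field_simp; nlinarith
      rw [this, Real.sqrt_div (by positivity), Real.sqrt_sq_eq_abs, Real.sqrt_sq hr0]
    have hsb : Real.sin b = x 1 / r := by
      rw [hb]; split_ifs with h
      · rw [hsinarccos, abs_of_nonneg h]
      · rw [Real.sin_neg, hsinarccos, abs_of_neg (not_le.1 h)]; ring
    have hbmem : b ∈ Set.Icc (-4 : ℝ) 4 := by
      have h1 := Real.arccos_nonneg (x 0 / r)
      have h2 := Real.arccos_le_pi (x 0 / r)
      have hpi := Real.pi_le_four
      rw [hb]; split_ifs <;> constructor <;> simp <;> linarith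
    refine ⟨![a, b], ?_, ?_⟩
    · intro i _
      fin_cases i
      · simpa using hamem
      · simpa using hbmem
    · refine PiLp.ext fun i => ?_
      fin_cases i
      · show Real.cos a * Real.cos b = x 0
        rw [hca, hcb]; field_simp
      · show Real.cos a * Real.sin b = x 1
        rw [hca, hsb]; field_simp
      · show Real.sin a = x 2
        exact hsa

lemma sphere_hmeas_lt_top : μH[2] (Metric.sphere (0 : E3) 1) < ⊤ := by
  have hbox : IsCompact (Set.univ.pi fun _ : Fin 2 => Set.Icc (-4 : ℝ) 4) :=
    isCompact_univ_pi fun _ => isCompact_Icc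
  have h2 : (μH[2] : Measure (Fin 2 → ℝ)) = volume := by
    have h := MeasureTheory.hausdorffMeasure_pi_real (ι := Fin 2)
    norm_num at h
    exact h
  calc μH[2] (Metric.sphere (0 : E3) 1)
      ≤ μH[2] (sphMap '' (Set.univ.pi fun _ : Fin 2 => Set.Icc (-4 : ℝ) 4)) :=
        measure_mono sphere_subset_image
    _ ≤ ((3 : NNReal) : ℝ≥0∞) ^ (2 : ℝ) * μH[2] (Set.univ.pi fun _ : Fin 2 => Set.Icc (-4 : ℝ) 4) :=
        sphMap_lip.hausdorffMeasure_image_le (by norm_num) _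
    _ < ⊤ := by
        rw [h2]
        refine ENNReal.mul_lt_top ?_ hbox.measure_lt_top
        exact ENNReal.rpow_lt_top_of_nonneg (by norm_num) ENNReal.coe_ne_top


lemma maxw_pos (v : E3) : 0 < Maxw v := by
  unfold Maxw; positivity

lemma sqrt_maxw_eq (v : E3) :
    Real.sqrt (Maxw v) = (Real.sqrt (2 * π))⁻¹ * Real.exp (-‖v‖ ^ 2 / 4) := by
  unfold Maxw
  rw [Real.sqrt_mul' _ (Real.exp_nonneg _), Real.sqrt_inv, ← Real.exp_half,
    show -‖v‖ ^ 2 / 2 / 2 = -‖v‖ ^ 2 / 4 by ring]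

lemma weight_bound {θ b M : ℝ} (hbθ : b = 1 / 4 + θ) (w : E3) (fval : ℝ)
    (h : Real.exp (θ * ‖w‖ ^ 2) * |fval| ≤ M) :
    |Real.sqrt (Maxw w) * fval| ≤ (Real.sqrt (2 * π))⁻¹ * (M * Real.exp (-(b * ‖w‖ ^ 2))) := by
  rw [abs_mul, abs_of_nonneg (Real.sqrt_nonneg _), sqrt_maxw_eq]
  have h2 := mul_le_mul_of_nonneg_left h (Real.exp_pos (-(b * ‖w‖ ^ 2))).le
  rw [← mul_assoc, ← Real.exp_add] at h2
  have h3 : -(b * ‖w‖ ^ 2) + θ * ‖w‖ ^ 2 = -‖w‖ ^ 2 / 4 := by rw [hbθ]; ring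
  rw [h3] at h2
  calc (Real.sqrt (2 * π))⁻¹ * Real.exp (-‖w‖ ^ 2 / 4) * |fval|
      = (Real.sqrt (2 * π))⁻¹ * (Real.exp (-‖w‖ ^ 2 / 4) * |fval|) := by ring
    _ ≤ (Real.sqrt (2 * π))⁻¹ * (Real.exp (-(b * ‖w‖ ^ 2)) * M) := by
        apply mul_le_mul_of_nonneg_left _ (by positivity)
        linarith
    _ = (Real.sqrt (2 * π))⁻¹ * (M * Real.exp (-(b * ‖w‖ ^ 2))) := by ring


set_option maxHeartbeats 2000000 in
theorem stmt9 (θ : ℝ) (hθ0 : 0 < θ) (hθ : θ < 1 / 4) :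
    ∃ C : ℝ, 0 < C ∧ ∀ (S : Set E3) (f g : E3 → E3 → ℝ),
      Measurable (Function.uncurry f) → Measurable (Function.uncurry g) →
      ∀ Mf Mg : ℝ,
        (∀ x ∈ S, ∀ v : E3, Real.exp (θ * ‖v‖ ^ 2) * |f x v| ≤ Mf) →
        (∀ x ∈ S, ∀ v : E3, Real.exp (θ * ‖v‖ ^ 2) * |g x v| ≤ Mg) →
        ∀ x ∈ S, ∀ v : E3,
          Real.exp (θ * ‖v‖ ^ 2) / Real.sqrt (1 + ‖v‖ ^ 2) * |GammaOp (f x) (g x) v|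
            ≤ C * Mf * Mg := by
  have hπ : (0 : ℝ) < π := Real.pi_pos
  set b : ℝ := 1 / 4 + θ with hbdef
  have hb : 0 < b := by rw [hbdef]; linarith
  set S₂ : ℝ := (μH[2] (Metric.sphere (0 : E3) 1)).toReal with hS₂
  have hS₂0 : 0 ≤ S₂ := ENNReal.toReal_nonneg
  set I₁ : ℝ := ∫ u : E3, Real.exp (-(b * ‖u‖ ^ 2)) with hI₁
  set I₂ : ℝ := ∫ u : E3, Real.exp (-(b / 2 * ‖u‖ ^ 2)) with hI₂
  have hI₁0 : 0 ≤ I₁ := integral_nonneg fun u => (Real.exp_pos _).le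
  have hI₂0 : 0 ≤ I₂ := integral_nonneg fun u => (Real.exp_pos _).le
  set C₀ : ℝ := Real.sqrt (2 * π) * S₂ * (2 * (2 * π)⁻¹) * (2 * I₁ + 2 / b * I₂) with hC₀
  have hC₀0 : 0 ≤ C₀ := by
    rw [hC₀]
    apply mul_nonneg
    · apply mul_nonneg (mul_nonneg (Real.sqrt_nonneg _) hS₂0) (by positivity)
    · have : (0:ℝ) ≤ 2 / b * I₂ := mul_nonneg (by positivity) hI₂0
      linarith
  refine ⟨C₀ + 1, by linarith, ?_⟩
  intro S f g _ _ Mf Mg hf hg x hx v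
  have hMf0 : 0 ≤ Mf := le_trans (by positivity) (hf x hx 0)
  have hMg0 : 0 ≤ Mg := le_trans (by positivity) (hg x hx 0)
  haveI : IsFiniteMeasure ((μH[2] : Measure E3).restrict (Metric.sphere (0 : E3) 1)) :=
    ⟨by rw [Measure.restrict_apply_univ]; exact sphere_hmeas_lt_top⟩
  set F : E3 → ℝ := fun u => Real.sqrt (Maxw u) * f x u with hF
  set G : E3 → ℝ := fun u => Real.sqrt (Maxw u) * g x u with hG
  have hprod : ∀ w z : E3, |F w * G z| ≤
      (2 * π)⁻¹ * ((Mf * Mg) * Real.exp (-(b * (‖w‖ ^ 2 + ‖z‖ ^ 2)))) := by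
    intro w z
    rw [abs_mul]
    have h1 := weight_bound hbdef w (f x w) (hf x hx w)
    have h2 := weight_bound hbdef z (g x z) (hg x hx z)
    have h3 := mul_le_mul h1 h2 (abs_nonneg _) (by positivity)
    refine h3.trans (le_of_eq ?_)
    have hsq : (Real.sqrt (2 * π))⁻¹ * (Real.sqrt (2 * π))⁻¹ = (2 * π)⁻¹ := by
      rw [← mul_inv, Real.mul_self_sqrt (by positivity)]
    calc (Real.sqrt (2 * π))⁻¹ * (Mf * Real.exp (-(b * ‖w‖ ^ 2))) *
          ((Real.sqrt (2 * π))⁻¹ * (Mg * Real.exp (-(b * ‖z‖ ^ 2))))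
        = (Real.sqrt (2 * π))⁻¹ * (Real.sqrt (2 * π))⁻¹ *
            ((Mf * Mg) * (Real.exp (-(b * ‖w‖ ^ 2)) * Real.exp (-(b * ‖z‖ ^ 2)))) := by ring
      _ = (2 * π)⁻¹ * ((Mf * Mg) * Real.exp (-(b * (‖w‖ ^ 2 + ‖z‖ ^ 2)))) := by
          rw [hsq, ← Real.exp_add, show -(b * ‖w‖ ^ 2) + -(b * ‖z‖ ^ 2)
            = -(b * (‖w‖ ^ 2 + ‖z‖ ^ 2)) by ring]
  have hinteg : ∀ u : E3, ∀ ω ∈ Metric.sphere (0 : E3) 1,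
      |(|⟪v - u, ω⟫| * (F (u + ⟪v - u, ω⟫ • ω) * G (v - ⟪v - u, ω⟫ • ω) - F u * G v))|
        ≤ (‖v‖ + ‖u‖) * ((2 * (2 * π)⁻¹) * ((Mf * Mg) *
            Real.exp (-(b * (‖u‖ ^ 2 + ‖v‖ ^ 2))))) := by
    intro u ω hω
    have hω1 : ‖ω‖ = 1 := by simpa using hω
    have hc : |⟪v - u, ω⟫| ≤ ‖v‖ + ‖u‖ := by
      calc |⟪v - u, ω⟫| ≤ ‖v - u‖ * ‖ω‖ := abs_real_inner_le_norm _ _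
        _ = ‖v - u‖ := by rw [hω1, mul_one]
        _ ≤ ‖v‖ + ‖u‖ := norm_sub_le _ _
    have h1 := hprod (u + ⟪v - u, ω⟫ • ω) (v - ⟪v - u, ω⟫ • ω)
    rw [coll_id u v ω hω1] at h1
    have h2 := hprod u v
    rw [abs_mul, abs_abs]
    have h4 : |F (u + ⟪v - u, ω⟫ • ω) * G (v - ⟪v - u, ω⟫ • ω) - F u * G v|
        ≤ (2 * (2 * π)⁻¹) * ((Mf * Mg) * Real.exp (-(b * (‖u‖ ^ 2 + ‖v‖ ^ 2)))) := by
      have h5 := abs_sub (F (u + ⟪v - u, ω⟫ • ω) * G (v - ⟪v - u, ω⟫ • ω)) (F u * G v)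
      linarith
    exact mul_le_mul hc h4 (abs_nonneg _) (by positivity)
  have hinner : ∀ u : E3,
      |∫ ω in Metric.sphere (0 : E3) 1,
          |⟪v - u, ω⟫| * (F (u + ⟪v - u, ω⟫ • ω) * G (v - ⟪v - u, ω⟫ • ω) - F u * G v) ∂μH[2]|
        ≤ S₂ * ((‖v‖ + ‖u‖) * ((2 * (2 * π)⁻¹) * ((Mf * Mg) *
            Real.exp (-(b * (‖u‖ ^ 2 + ‖v‖ ^ 2)))))) := by
    intro u
    calc |∫ ω in Metric.sphere (0 : E3) 1,
            |⟪v - u, ω⟫| * (F (u + ⟪v - u, ω⟫ • ω) * G (v - ⟪v - u, ω⟫ • ω) - F u * G v) ∂μH[2]|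
        ≤ ∫ ω in Metric.sphere (0 : E3) 1,
            |(|⟪v - u, ω⟫| * (F (u + ⟪v - u, ω⟫ • ω) * G (v - ⟪v - u, ω⟫ • ω) - F u * G v))|
              ∂μH[2] := by
          have := norm_integral_le_integral_norm (μ := (μH[2] : Measure E3).restrict
            (Metric.sphere (0 : E3) 1)) (fun ω : E3 =>
            |⟪v - u, ω⟫| * (F (u + ⟪v - u, ω⟫ • ω) * G (v - ⟪v - u, ω⟫ • ω) - F u * G v))
          simpa only [Real.norm_eq_abs] using this
      _ ≤ ∫ _ω in Metric.sphere (0 : E3) 1,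
            (‖v‖ + ‖u‖) * ((2 * (2 * π)⁻¹) * ((Mf * Mg) *
              Real.exp (-(b * (‖u‖ ^ 2 + ‖v‖ ^ 2))))) ∂μH[2] := by
          apply integral_mono_of_nonneg (Filter.Eventually.of_forall fun ω => abs_nonneg _)
            (integrable_const _)
          exact ae_restrict_of_forall_mem Metric.isClosed_sphere.measurableSet (hinteg u)
      _ = S₂ * ((‖v‖ + ‖u‖) * ((2 * (2 * π)⁻¹) * ((Mf * Mg) *
            Real.exp (-(b * (‖u‖ ^ 2 + ‖v‖ ^ 2)))))) := by
          rw [setIntegral_const, smul_eq_mul, hS₂, measureReal_def]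
  have hGauss1 : Integrable (fun u : E3 => Real.exp (-(b * ‖u‖ ^ 2))) := gauss_integrable hb
  have hGauss2 : Integrable (fun u : E3 => Real.exp (-(b / 2 * ‖u‖ ^ 2))) :=
    gauss_integrable (by linarith)
  set P : ℝ := S₂ * ((2 * (2 * π)⁻¹) * ((Mf * Mg) * Real.exp (-(b * ‖v‖ ^ 2)))) with hP
  have hP0 : 0 ≤ P := by
    rw [hP]; apply mul_nonneg hS₂0; positivity
  set Bnd : E3 → ℝ := fun u => P * ((‖v‖ + 1) * Real.exp (-(b * ‖u‖ ^ 2))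
    + 2 / b * Real.exp (-(b / 2 * ‖u‖ ^ 2))) with hBnd
  have hBndInt : Integrable Bnd :=
    (((hGauss1.const_mul (‖v‖ + 1)).add (hGauss2.const_mul (2 / b))).const_mul P)
  have hptw : ∀ u : E3, S₂ * ((‖v‖ + ‖u‖) * ((2 * (2 * π)⁻¹) * ((Mf * Mg) *
      Real.exp (-(b * (‖u‖ ^ 2 + ‖v‖ ^ 2)))))) ≤ Bnd u := by
    intro u
    have hkey : (‖v‖ + ‖u‖) * Real.exp (-(b * ‖u‖ ^ 2)) ≤
        (‖v‖ + 1) * Real.exp (-(b * ‖u‖ ^ 2)) + 2 / b * Real.exp (-(b / 2 * ‖u‖ ^ 2)) := by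
      have hu1 : ‖u‖ ≤ 1 + ‖u‖ ^ 2 := by nlinarith [norm_nonneg u, sq_nonneg (‖u‖ - 1)]
      have hs : ‖u‖ ^ 2 * Real.exp (-(b / 2 * ‖u‖ ^ 2)) ≤ 2 / b := by
        have e2 : b / 2 * ‖u‖ ^ 2 + 1 ≤ Real.exp (b / 2 * ‖u‖ ^ 2) := Real.add_one_le_exp _
        have e1 : Real.exp (-(b / 2 * ‖u‖ ^ 2)) * Real.exp (b / 2 * ‖u‖ ^ 2) = 1 := by
          rw [← Real.exp_add]; simp
        have e3 : Real.exp (-(b / 2 * ‖u‖ ^ 2)) * (b / 2 * ‖u‖ ^ 2 + 1) ≤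
            Real.exp (-(b / 2 * ‖u‖ ^ 2)) * Real.exp (b / 2 * ‖u‖ ^ 2) :=
          mul_le_mul_of_nonneg_left e2 (Real.exp_pos _).le
        rw [e1] at e3
        rw [le_div_iff₀ hb]
        nlinarith [e3, Real.exp_pos (-(b / 2 * ‖u‖ ^ 2))]
      have hsplit : Real.exp (-(b * ‖u‖ ^ 2)) =
          Real.exp (-(b / 2 * ‖u‖ ^ 2)) * Real.exp (-(b / 2 * ‖u‖ ^ 2)) := by
        rw [← Real.exp_add]; congr 1; ring
      have h6 : ‖u‖ ^ 2 * Real.exp (-(b * ‖u‖ ^ 2)) ≤ 2 / b * Real.exp (-(b / 2 * ‖u‖ ^ 2)) := by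
        rw [hsplit, ← mul_assoc]
        exact mul_le_mul_of_nonneg_right hs (Real.exp_pos _).le
      have h7 : (‖v‖ + ‖u‖) * Real.exp (-(b * ‖u‖ ^ 2)) ≤
          (‖v‖ + 1) * Real.exp (-(b * ‖u‖ ^ 2)) + ‖u‖ ^ 2 * Real.exp (-(b * ‖u‖ ^ 2)) := by
        have := Real.exp_pos (-(b * ‖u‖ ^ 2))
        nlinarith
      linarith
    calc S₂ * ((‖v‖ + ‖u‖) * ((2 * (2 * π)⁻¹) * ((Mf * Mg) *
          Real.exp (-(b * (‖u‖ ^ 2 + ‖v‖ ^ 2))))))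
        = P * ((‖v‖ + ‖u‖) * Real.exp (-(b * ‖u‖ ^ 2))) := by
          rw [hP, show -(b * (‖u‖ ^ 2 + ‖v‖ ^ 2)) = -(b * ‖v‖ ^ 2) + -(b * ‖u‖ ^ 2) by ring,
            Real.exp_add]
          ring
      _ ≤ P * ((‖v‖ + 1) * Real.exp (-(b * ‖u‖ ^ 2))
            + 2 / b * Real.exp (-(b / 2 * ‖u‖ ^ 2))) := mul_le_mul_of_nonneg_left hkey hP0
      _ = Bnd u := rfl
  have hQ : |Qcol F G v| ≤ P * ((‖v‖ + 1) * I₁ + 2 / b * I₂) := by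
    have hQ1 : |Qcol F G v| ≤ ∫ u : E3, Bnd u := by
      calc |Qcol F G v| ≤ ∫ u : E3, |∫ ω in Metric.sphere (0 : E3) 1,
            |⟪v - u, ω⟫| * (F (u + ⟪v - u, ω⟫ • ω) * G (v - ⟪v - u, ω⟫ • ω) - F u * G v)
              ∂μH[2]| := by
            have := norm_integral_le_integral_norm (μ := (volume : Measure E3))
              (fun u : E3 => ∫ ω in Metric.sphere (0 : E3) 1,
                |⟪v - u, ω⟫| * (F (u + ⟪v - u, ω⟫ • ω) * G (v - ⟪v - u, ω⟫ • ω) - F u * G v)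
                  ∂μH[2])
            simpa only [Real.norm_eq_abs, Qcol] using this
        _ ≤ ∫ u : E3, Bnd u := by
            apply integral_mono_of_nonneg (Filter.Eventually.of_forall fun u => abs_nonneg _)
              hBndInt
            exact Filter.Eventually.of_forall fun u => (hinner u).trans (hptw u)
    refine hQ1.trans (le_of_eq ?_)
    simp only [hBnd]
    rw [integral_const_mul, integral_add (hGauss1.const_mul _) (hGauss2.const_mul _),
      integral_const_mul, integral_const_mul]
  -- final assembly
  have hW : (1 : ℝ) ≤ Real.sqrt (1 + ‖v‖ ^ 2) := by
    have h := Real.sqrt_le_sqrt (show (1 : ℝ) ≤ 1 + ‖v‖ ^ 2 by nlinarith [sq_nonneg ‖v‖])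
    rwa [Real.sqrt_one] at h
  have hWv : ‖v‖ ≤ Real.sqrt (1 + ‖v‖ ^ 2) := by
    have h := Real.sqrt_le_sqrt (show ‖v‖ ^ 2 ≤ 1 + ‖v‖ ^ 2 by linarith [sq_nonneg ‖v‖])
    rwa [Real.sqrt_sq (norm_nonneg v)] at h
  have hW0 : (0 : ℝ) < Real.sqrt (1 + ‖v‖ ^ 2) := lt_of_lt_of_le one_pos hW
  have hMax : (Real.sqrt (Maxw v))⁻¹ = Real.sqrt (2 * π) * Real.exp (‖v‖ ^ 2 / 4) := by
    rw [sqrt_maxw_eq, mul_inv, inv_inv, ← Real.exp_neg,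
      show -(-‖v‖ ^ 2 / 4) = ‖v‖ ^ 2 / 4 by ring]
  show Real.exp (θ * ‖v‖ ^ 2) / Real.sqrt (1 + ‖v‖ ^ 2) *
      |(Real.sqrt (Maxw v))⁻¹ * Qcol F G v| ≤ (C₀ + 1) * Mf * Mg
  rw [abs_mul, abs_of_nonneg (inv_nonneg.2 (Real.sqrt_nonneg _))]
  have hpre : 0 ≤ Real.exp (θ * ‖v‖ ^ 2) / Real.sqrt (1 + ‖v‖ ^ 2) *
      (Real.sqrt (Maxw v))⁻¹ := by positivity
  calc Real.exp (θ * ‖v‖ ^ 2) / Real.sqrt (1 + ‖v‖ ^ 2) *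
        ((Real.sqrt (Maxw v))⁻¹ * |Qcol F G v|)
      ≤ Real.exp (θ * ‖v‖ ^ 2) / Real.sqrt (1 + ‖v‖ ^ 2) *
        ((Real.sqrt (Maxw v))⁻¹ * (P * ((‖v‖ + 1) * I₁ + 2 / b * I₂))) := by
        apply mul_le_mul_of_nonneg_left _ (by positivity)
        exact mul_le_mul_of_nonneg_left hQ (inv_nonneg.2 (Real.sqrt_nonneg _))
    _ = (Real.exp (θ * ‖v‖ ^ 2) * (Real.exp (‖v‖ ^ 2 / 4) * Real.exp (-(b * ‖v‖ ^ 2)))) *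
        (Real.sqrt (2 * π) * S₂ * (2 * (2 * π)⁻¹) * (Mf * Mg) *
          ((‖v‖ + 1) * I₁ + 2 / b * I₂)) / Real.sqrt (1 + ‖v‖ ^ 2) := by
        rw [hMax, hP]; ring
    _ = Real.sqrt (2 * π) * S₂ * (2 * (2 * π)⁻¹) * (Mf * Mg) *
          ((‖v‖ + 1) * I₁ + 2 / b * I₂) / Real.sqrt (1 + ‖v‖ ^ 2) := by
        rw [← Real.exp_add, ← Real.exp_add,
          show θ * ‖v‖ ^ 2 + (‖v‖ ^ 2 / 4 + -(b * ‖v‖ ^ 2)) = 0 by rw [hbdef]; ring,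
          Real.exp_zero, one_mul]
    _ ≤ (C₀ + 1) * Mf * Mg := by
        rw [div_le_iff₀ hW0]
        have hnum : (‖v‖ + 1) * I₁ + 2 / b * I₂ ≤
            Real.sqrt (1 + ‖v‖ ^ 2) * (2 * I₁ + 2 / b * I₂) := by
          have h8 : (‖v‖ + 1) * I₁ ≤ Real.sqrt (1 + ‖v‖ ^ 2) * (2 * I₁) := by
            have : ‖v‖ + 1 ≤ Real.sqrt (1 + ‖v‖ ^ 2) * 2 := by linarith
            calc (‖v‖ + 1) * I₁ ≤ (Real.sqrt (1 + ‖v‖ ^ 2) * 2) * I₁ :=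
                  mul_le_mul_of_nonneg_right this hI₁0
              _ = Real.sqrt (1 + ‖v‖ ^ 2) * (2 * I₁) := by ring
          have h9 : 2 / b * I₂ ≤ Real.sqrt (1 + ‖v‖ ^ 2) * (2 / b * I₂) := by
            have h10 : 0 ≤ 2 / b * I₂ := mul_nonneg (by positivity) hI₂0
            nlinarith
          calc (‖v‖ + 1) * I₁ + 2 / b * I₂
              ≤ Real.sqrt (1 + ‖v‖ ^ 2) * (2 * I₁) + Real.sqrt (1 + ‖v‖ ^ 2) * (2 / b * I₂) := by
                linarith
            _ = Real.sqrt (1 + ‖v‖ ^ 2) * (2 * I₁ + 2 / b * I₂) := by ring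
        have hpre2 : 0 ≤ Real.sqrt (2 * π) * S₂ * (2 * (2 * π)⁻¹) * (Mf * Mg) :=
          mul_nonneg (mul_nonneg (mul_nonneg (Real.sqrt_nonneg _) hS₂0) (by positivity))
            (mul_nonneg hMf0 hMg0)
        calc Real.sqrt (2 * π) * S₂ * (2 * (2 * π)⁻¹) * (Mf * Mg) *
              ((‖v‖ + 1) * I₁ + 2 / b * I₂)
            ≤ Real.sqrt (2 * π) * S₂ * (2 * (2 * π)⁻¹) * (Mf * Mg) *
              (Real.sqrt (1 + ‖v‖ ^ 2) * (2 * I₁ + 2 / b * I₂)) :=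
              mul_le_mul_of_nonneg_left hnum hpre2
          _ = (C₀ * Mf * Mg) * Real.sqrt (1 + ‖v‖ ^ 2) := by rw [hC₀]; ring
          _ ≤ ((C₀ + 1) * Mf * Mg) * Real.sqrt (1 + ‖v‖ ^ 2) := by
              have : C₀ * Mf * Mg ≤ (C₀ + 1) * Mf * Mg := by nlinarith
              exact mul_le_mul_of_nonneg_right this hW0.le
end
end

section
/- The hard-sphere collision frequency ν(v) = ∫_{ℝ³}∫_{S²}|(v−u)·ω| μ(u) dω du satisfies ν(v) ≥ c√(1+|v|²) for some constant c > 0 and all v ∈ ℝ³, and its gradient is uniformly bounded: |∇_v ν(v)| ≤ C for all v ∈ ℝ³. -/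
noncomputable section

open Real MeasureTheory
open scoped RealInnerProductSpace ENNReal

namespace NuAux

open scoped NNReal

abbrev EE2 : Type := EuclideanSpace ℝ (Fin 2)

lemma hm_pi2 : (μH[(2:ℝ)] : Measure (Fin 2 → ℝ)) = volume := by
  have := hausdorffMeasure_pi_real (ι := Fin 2)
  simpa using this

def K0 : ℝ≥0 := (Fintype.card (Fin 2) : ℝ≥0) ^ ((1:ℝ≥0∞)/2).toReal

lemma K0_pos : 0 < K0 := by
  have : (0:ℝ≥0) < (Fintype.card (Fin 2) : ℝ≥0) := by simp
  exact NNReal.rpow_pos (by simpa using this)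

lemma lip_symm2 : LipschitzWith K0 ((WithLp.equiv 2 (Fin 2 → ℝ)).symm) :=
  (PiLp.antilipschitzWith_ofLp 2 (fun _ : Fin 2 => ℝ)).to_rightInverse
    (fun x => (WithLp.equiv 2 (Fin 2 → ℝ)).apply_symm_apply x)

lemma lip_equiv2 : LipschitzWith 1 (WithLp.equiv 2 (Fin 2 → ℝ)) :=
  PiLp.lipschitzWith_ofLp 2 _

/-- Bounded subsets of the Euclidean plane have finite 2-dim Hausdorff measure. -/
lemma hmE2_lt_top {A : Set EE2} (hA : Bornology.IsBounded A) : μH[(2:ℝ)] A < ∞ := by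
  obtain ⟨r, hr⟩ := hA.subset_closedBall 0
  have h1 : A ⊆ (WithLp.equiv 2 (Fin 2 → ℝ)).symm '' (Metric.closedBall (0 : Fin 2 → ℝ) r) := by
    intro x hx
    refine ⟨WithLp.equiv 2 _ x, ?_, by simp⟩
    have := lip_equiv2.dist_le_mul x 0
    simp only [NNReal.coe_one, one_mul] at this
    have hx' := hr hx
    simp only [Metric.mem_closedBall] at hx' ⊢
    calc dist (WithLp.equiv 2 (Fin 2 → ℝ) x) 0 = dist (WithLp.equiv 2 (Fin 2 → ℝ) x) (WithLp.equiv 2 (Fin 2 → ℝ) 0) := by simp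
    _ ≤ dist x 0 := this
    _ ≤ r := hx'
  calc μH[(2:ℝ)] A ≤ μH[(2:ℝ)] ((WithLp.equiv 2 (Fin 2 → ℝ)).symm '' (Metric.closedBall (0 : Fin 2 → ℝ) r)) :=
        measure_mono h1
    _ ≤ (K0 : ℝ≥0∞) ^ (2:ℝ) * μH[(2:ℝ)] (Metric.closedBall (0 : Fin 2 → ℝ) r) :=
        lip_symm2.hausdorffMeasure_image_le (by norm_num) _
    _ < ∞ := by
        rw [hm_pi2]
        exact ENNReal.mul_lt_top (ENNReal.rpow_lt_top_of_nonneg (by norm_num) ENNReal.coe_ne_top) (isCompact_closedBall _ _).measure_lt_top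

/-- Closed balls in the Euclidean plane have positive 2-dim Hausdorff measure. -/
lemma hmE2_pos {r : ℝ} (hr : 0 < r) : 0 < μH[(2:ℝ)] (Metric.closedBall (0:EE2) r) := by
  have h1 : Metric.closedBall (0 : Fin 2 → ℝ) (r / K0) ⊆
      (WithLp.equiv 2 (Fin 2 → ℝ)) '' (Metric.closedBall (0:EE2) r) := by
    intro y hy
    refine ⟨(WithLp.equiv 2 (Fin 2 → ℝ)).symm y, ?_, by simp⟩
    have := lip_symm2.dist_le_mul y 0
    simp only [Metric.mem_closedBall] at hy ⊢
    calc dist ((WithLp.equiv 2 (Fin 2 → ℝ)).symm y) 0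
        = dist ((WithLp.equiv 2 (Fin 2 → ℝ)).symm y) ((WithLp.equiv 2 (Fin 2 → ℝ)).symm 0) := by simp
      _ ≤ K0 * dist y 0 := lip_symm2.dist_le_mul y 0
      _ ≤ K0 * (r / K0) := by
          have hk : (0:ℝ) < K0 := by exact_mod_cast K0_pos
          gcongr
      _ = r := by
          have hk : (K0:ℝ) ≠ 0 := by exact_mod_cast K0_pos.ne'
          field_simp
  have h2 : (volume (Metric.closedBall (0 : Fin 2 → ℝ) (r / K0))) ≤
      μH[(2:ℝ)] (Metric.closedBall (0:EE2) r) := by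
    rw [← hm_pi2]
    calc μH[(2:ℝ)] (Metric.closedBall (0 : Fin 2 → ℝ) (r / K0))
        ≤ μH[(2:ℝ)] ((WithLp.equiv 2 (Fin 2 → ℝ)) '' (Metric.closedBall (0:EE2) r)) := measure_mono h1
      _ ≤ (1 : ℝ≥0) ^ (2:ℝ) * μH[(2:ℝ)] (Metric.closedBall (0:EE2) r) :=
          lip_equiv2.hausdorffMeasure_image_le (by norm_num) _
      _ = μH[(2:ℝ)] (Metric.closedBall (0:EE2) r) := by simp
  refine lt_of_lt_of_le ?_ h2
  apply Metric.measure_closedBall_pos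
  have hk : (0:ℝ) < K0 := by exact_mod_cast K0_pos
  positivity

def hfun (p : EE2) : ℝ := Real.sqrt (1 - ‖p‖^2)

def Dset : Set EE2 := {p | ‖p‖^2 ≤ 3/4}

lemma hfun_mem_lower {p : EE2} (hp : p ∈ Dset) : 1/2 ≤ hfun p := by
  have h : (1/4 : ℝ) ≤ 1 - ‖p‖^2 := by have := hp; simp only [Dset, Set.mem_setOf_eq] at this; linarith
  have : Real.sqrt (1/4) ≤ hfun p := Real.sqrt_le_sqrt h
  rwa [show (1/4:ℝ) = (1/2)^2 by norm_num, Real.sqrt_sq (by norm_num)] at this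

lemma hfun_sq {p : EE2} (hp : ‖p‖^2 ≤ 1) : (hfun p)^2 = 1 - ‖p‖^2 :=
  Real.sq_sqrt (by linarith)

lemma hfun_lip {p q : EE2} (hp : p ∈ Dset) (hq : q ∈ Dset) :
    |hfun p - hfun q| ≤ Real.sqrt 3 * ‖p - q‖ := by
  have hp' : ‖p‖^2 ≤ 3/4 := hp
  have hq' : ‖q‖^2 ≤ 3/4 := hq
  have h1 : 1/2 ≤ hfun p := hfun_mem_lower hp
  have h2 : 1/2 ≤ hfun q := hfun_mem_lower hq
  have hsq1 : (hfun p)^2 = 1 - ‖p‖^2 := hfun_sq (by linarith)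
  have hsq2 : (hfun q)^2 = 1 - ‖q‖^2 := hfun_sq (by linarith)
  have key : |hfun p - hfun q| * 1 ≤ |hfun p - hfun q| * (hfun p + hfun q) := by
    apply mul_le_mul_of_nonneg_left (by linarith) (abs_nonneg _)
  have key2 : |hfun p - hfun q| * (hfun p + hfun q) = |‖q‖^2 - ‖p‖^2| := by
    rw [← abs_of_nonneg (show 0 ≤ hfun p + hfun q by linarith), ← abs_mul]
    congr 1
    nlinarith [hsq1, hsq2]
  have key3 : |‖q‖^2 - ‖p‖^2| ≤ Real.sqrt 3 * ‖p - q‖ := by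
    have e1 : ‖q‖^2 - ‖p‖^2 = (‖q‖ - ‖p‖) * (‖q‖ + ‖p‖) := by ring
    rw [e1, abs_mul, abs_of_nonneg (by positivity : (0:ℝ) ≤ ‖q‖ + ‖p‖)]
    have e2 : |‖q‖ - ‖p‖| ≤ ‖p - q‖ := by
      calc |‖q‖ - ‖p‖| ≤ ‖q - p‖ := abs_norm_sub_norm_le q p
        _ = ‖p - q‖ := norm_sub_rev q p
    have e3 : ‖q‖ + ‖p‖ ≤ Real.sqrt 3 := by
      nlinarith [Real.sq_sqrt (by norm_num : (0:ℝ) ≤ 3), Real.sqrt_nonneg 3,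
        norm_nonneg p, norm_nonneg q, sq_nonneg (‖p‖ - ‖q‖),
        sq_nonneg (‖p‖ + ‖q‖ - Real.sqrt 3)]
    calc |‖q‖ - ‖p‖| * (‖q‖ + ‖p‖) ≤ ‖p - q‖ * Real.sqrt 3 := by
          apply mul_le_mul e2 e3 (by positivity) (norm_nonneg _)
      _ = Real.sqrt 3 * ‖p - q‖ := by ring
  calc |hfun p - hfun q| = |hfun p - hfun q| * 1 := by ring
    _ ≤ |‖q‖^2 - ‖p‖^2| := by rw [← key2]; exact key
    _ ≤ Real.sqrt 3 * ‖p - q‖ := key3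

/-- Chart for the cap where `σ * ω i` is large. -/
def chart (i : Fin 3) (σ : ℝ) (p : EE2) : E3 :=
  (WithLp.equiv 2 (Fin 3 → ℝ)).symm (i.insertNth (σ * hfun p) (fun k => p (k : Fin 2)))

lemma chart_apply_same (i : Fin 3) (σ : ℝ) (p : EE2) : chart i σ p i = σ * hfun p := by
  simp [chart, WithLp.equiv_symm_apply]

lemma chart_apply_succAbove (i : Fin 3) (σ : ℝ) (p : EE2) (k : Fin 2) :
    chart i σ p (i.succAbove k) = p k := by
  simp [chart, WithLp.equiv_symm_apply]

lemma chart_lip (i : Fin 3) (σ : ℝ) (hσ : σ = 1 ∨ σ = -1) :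
    LipschitzOnWith 2 (chart i σ) Dset := by
  rw [lipschitzOnWith_iff_dist_le_mul]
  intro p hp q hq
  rw [dist_eq_norm, dist_eq_norm]
  have hσ2 : σ^2 = 1 := by rcases hσ with h | h <;> simp [h]
  have hnorm : ‖chart i σ p - chart i σ q‖^2 ≤ (2 * ‖p - q‖)^2 := by
    rw [show ‖chart i σ p - chart i σ q‖^2 = ∑ j, ((chart i σ p - chart i σ q) j)^2 by
      rw [EuclideanSpace.norm_eq]
      rw [Real.sq_sqrt (by positivity)]
      congr 1; ext j; rw [Real.norm_eq_abs, sq_abs]]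
    rw [Fin.sum_univ_succAbove (fun j => ((chart i σ p - chart i σ q) j)^2) i]
    have hc1 : (chart i σ p - chart i σ q) i = σ * (hfun p - hfun q) := by
      simp [PiLp.sub_apply, chart_apply_same]; ring
    have hc2 : ∀ k : Fin 2, (chart i σ p - chart i σ q) (i.succAbove k) = (p - q) k := by
      intro k; simp [PiLp.sub_apply, chart_apply_succAbove]
    have hsum : ∑ k : Fin 2, ((chart i σ p - chart i σ q) (i.succAbove k))^2 = ‖p - q‖^2 := by
      rw [EuclideanSpace.norm_eq, Real.sq_sqrt (by positivity)]
      exact Finset.sum_congr rfl fun k _ => by rw [hc2 k, Real.norm_eq_abs, sq_abs]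
    rw [hc1, hsum]
    have hlip := hfun_lip hp hq
    have h3 : (hfun p - hfun q)^2 ≤ 3 * ‖p - q‖^2 := by
      have := abs_nonneg (hfun p - hfun q)
      nlinarith [Real.sq_sqrt (by norm_num : (0:ℝ) ≤ 3), Real.sqrt_nonneg 3, norm_nonneg (p - q),
        sq_abs (hfun p - hfun q)]
    have : (σ * (hfun p - hfun q))^2 = (hfun p - hfun q)^2 := by
      rw [mul_pow, hσ2, one_mul]
    rw [this]
    nlinarith [norm_nonneg (p - q)]
  have h4 : (0:ℝ) ≤ 2 * ‖p - q‖ := by positivity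
  calc ‖chart i σ p - chart i σ q‖ ≤ 2 * ‖p - q‖ := by nlinarith [norm_nonneg (chart i σ p - chart i σ q)]
    _ = (2:ℝ≥0) * ‖p - q‖ := by norm_num

def cap (i : Fin 3) (σ : ℝ) : Set E3 := Metric.sphere (0:E3) 1 ∩ {ω | 1/2 ≤ σ * ω i}

lemma norm_sq_eq_sum (ω : E3) : ‖ω‖^2 = ∑ j, (ω j)^2 := by
  rw [EuclideanSpace.norm_eq, Real.sq_sqrt (by positivity)]
  exact Finset.sum_congr rfl fun j _ => by rw [Real.norm_eq_abs, sq_abs]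

lemma norm_sq_eq_sum2 (p : EE2) : ‖p‖^2 = ∑ k, (p k)^2 := by
  rw [EuclideanSpace.norm_eq, Real.sq_sqrt (by positivity)]
  exact Finset.sum_congr rfl fun j _ => by rw [Real.norm_eq_abs, sq_abs]

lemma cap_subset_chart (i : Fin 3) (σ : ℝ) (hσ : σ = 1 ∨ σ = -1) :
    cap i σ ⊆ chart i σ '' Dset := by
  rintro ω ⟨hω1, hω2⟩
  rw [mem_sphere_zero_iff_norm] at hω1
  simp only [Set.mem_setOf_eq] at hω2
  have hσ2 : σ^2 = 1 := by rcases hσ with h | h <;> simp [h]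
  set p : EE2 := (WithLp.equiv 2 (Fin 2 → ℝ)).symm (fun k => ω (i.succAbove k)) with hp
  have hpk : ∀ k, p k = ω (i.succAbove k) := fun k => rfl
  have hps : ‖p‖^2 = 1 - (ω i)^2 := by
    rw [norm_sq_eq_sum2]
    have := norm_sq_eq_sum ω
    rw [hω1] at this
    rw [Fin.sum_univ_succAbove (fun j => (ω j)^2) i] at this
    simp only [hpk]
    nlinarith [this]
  have hωi : (1/2:ℝ)^2 ≤ (ω i)^2 := by nlinarith [hω2]
  have hpD : p ∈ Dset := by
    simp only [Dset, Set.mem_setOf_eq, hps]; nlinarith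
  refine ⟨p, hpD, ?_⟩
  have hhf : hfun p = σ * ω i := by
    rw [hfun, hps]
    rw [show 1 - (1 - (ω i)^2) = (σ * ω i)^2 by nlinarith]
    exact Real.sqrt_sq (by linarith)
  have : ∀ j, chart i σ p j = ω j := by
    refine Fin.succAboveCases i ?_ ?_
    · rw [chart_apply_same, hhf]
      rcases hσ with h | h <;> subst h <;> ring
    · intro k; rw [chart_apply_succAbove, hpk]
  exact PiLp.ext this

lemma Dset_bounded : Bornology.IsBounded Dset := by
  apply Bornology.IsBounded.subset (Metric.isBounded_closedBall (x := (0:EE2)) (r := 1))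
  intro p hp
  have hp' : ‖p‖^2 ≤ 3/4 := hp
  simp only [Metric.mem_closedBall, dist_zero_right]
  nlinarith [norm_nonneg p]

lemma cap_lt_top (i : Fin 3) (σ : ℝ) (hσ : σ = 1 ∨ σ = -1) : μH[(2:ℝ)] (cap i σ) < ∞ := by
  calc μH[(2:ℝ)] (cap i σ) ≤ μH[(2:ℝ)] (chart i σ '' Dset) := measure_mono (cap_subset_chart i σ hσ)
    _ ≤ (2:ℝ≥0) ^ (2:ℝ) * μH[(2:ℝ)] Dset := (chart_lip i σ hσ).hausdorffMeasure_image_le (by norm_num)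
    _ < ∞ := ENNReal.mul_lt_top (ENNReal.rpow_lt_top_of_nonneg (by norm_num) ENNReal.coe_ne_top) (hmE2_lt_top Dset_bounded)

lemma sphere_subset_caps : Metric.sphere (0:E3) 1 ⊆ ⋃ i : Fin 3, (cap i 1 ∪ cap i (-1)) := by
  intro ω hω
  have hω1 : ‖ω‖ = 1 := mem_sphere_zero_iff_norm.mp hω
  have hsum : ∑ j, (ω j)^2 = 1 := by rw [← norm_sq_eq_sum, hω1]; norm_num
  have : ∃ j, (1/4:ℝ) ≤ (ω j)^2 := by
    by_contra h
    push_neg at h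
    rw [Fin.sum_univ_three] at hsum
    linarith [h 0, h 1, h 2]
  obtain ⟨j, hj⟩ := this
  have habs : 1/2 ≤ |ω j| := by
    nlinarith [abs_nonneg (ω j), sq_abs (ω j)]
  refine Set.mem_iUnion.mpr ⟨j, ?_⟩
  rcases abs_cases (ω j) with ⟨he, _⟩ | ⟨he, _⟩
  · exact Or.inl ⟨hω, by simp only [Set.mem_setOf_eq, one_mul]; linarith⟩
  · exact Or.inr ⟨hω, by simp only [Set.mem_setOf_eq]; linarith⟩

lemma sphere_hm_lt_top : μH[(2:ℝ)] (Metric.sphere (0:E3) 1) < ∞ := by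
  calc μH[(2:ℝ)] (Metric.sphere (0:E3) 1) ≤ ∑' i : Fin 3, μH[(2:ℝ)] (cap i 1 ∪ cap i (-1)) :=
      (measure_mono sphere_subset_caps).trans (measure_iUnion_le _)
    _ < ∞ := by
      rw [tsum_fintype]
      apply ENNReal.sum_lt_top.mpr
      intro i _
      exact (measure_union_le _ _).trans_lt
        (ENNReal.add_lt_top.mpr ⟨cap_lt_top i 1 (Or.inl rfl), cap_lt_top i (-1) (Or.inr rfl)⟩)

def projE : E3 → EE2 := fun ω => (WithLp.equiv 2 (Fin 2 → ℝ)).symm (fun k => ω ((0:Fin 3).succAbove k))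

lemma projE_lip : LipschitzWith 1 projE := by
  apply LipschitzWith.of_dist_le_mul
  intro x y
  rw [NNReal.coe_one, one_mul, dist_eq_norm, dist_eq_norm]
  have h2 : ‖projE x - projE y‖^2 ≤ ‖x - y‖^2 := by
    rw [norm_sq_eq_sum2, norm_sq_eq_sum]
    rw [Fin.sum_univ_succAbove (fun j => ((x - y) j)^2) 0]
    have : ∀ k : Fin 2, (projE x - projE y) k = (x - y) ((0:Fin 3).succAbove k) := fun k => rfl
    rw [Finset.sum_congr rfl fun k _ => by rw [this k]]
    nlinarith [sq_nonneg ((x - y) (0:Fin 3))]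
  nlinarith [norm_nonneg (projE x - projE y), norm_nonneg (x - y)]

lemma ball_subset_proj_cap : Metric.closedBall (0:EE2) (1/2) ⊆ projE '' (cap 0 1) := by
  intro p hp
  rw [Metric.mem_closedBall, dist_zero_right] at hp
  have hp2 : ‖p‖^2 ≤ 1/4 := by nlinarith [norm_nonneg p]
  have hpD : p ∈ Dset := by simp only [Dset, Set.mem_setOf_eq]; linarith
  set ω := chart 0 1 p with hω
  have hsq : (hfun p)^2 = 1 - ‖p‖^2 := hfun_sq (by linarith)
  have hωn : ‖ω‖ = 1 := by
    have : ‖ω‖^2 = 1 := by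
      rw [norm_sq_eq_sum, Fin.sum_univ_succAbove (fun j => (ω j)^2) 0]
      have h0 : ω (0:Fin 3) = 1 * hfun p := chart_apply_same 0 1 p
      have hk : ∀ k : Fin 2, ω ((0:Fin 3).succAbove k) = p k := chart_apply_succAbove 0 1 p
      rw [h0, Finset.sum_congr rfl fun k _ => by rw [hk k]]
      rw [← norm_sq_eq_sum2, one_mul, hsq]
      ring
    nlinarith [norm_nonneg ω]
  have hω0 : 1/2 ≤ (1:ℝ) * ω (0:Fin 3) := by
    rw [hω, chart_apply_same]
    have := hfun_mem_lower hpD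
    linarith
  refine ⟨ω, ⟨mem_sphere_zero_iff_norm.mpr hωn, hω0⟩, ?_⟩
  apply PiLp.ext
  intro k
  show ω ((0:Fin 3).succAbove k) = p k
  exact chart_apply_succAbove 0 1 p k

lemma cap_pos : 0 < μH[(2:ℝ)] (cap 0 1) := by
  have h1 : μH[(2:ℝ)] (Metric.closedBall (0:EE2) (1/2)) ≤ μH[(2:ℝ)] (projE '' (cap 0 1)) :=
    measure_mono ball_subset_proj_cap
  have h2 : μH[(2:ℝ)] (projE '' (cap 0 1)) ≤ (1:ℝ≥0) ^ (2:ℝ) * μH[(2:ℝ)] (cap 0 1) :=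
    projE_lip.hausdorffMeasure_image_le (by norm_num) _
  have := hmE2_pos (by norm_num : (0:ℝ) < 1/2)
  simp only [ENNReal.coe_one, ENNReal.one_rpow, one_mul] at h2
  exact this.trans_le (h1.trans h2)

def e0 : E3 := EuclideanSpace.single 0 1

lemma e0_norm : ‖e0‖ = 1 := by simp [e0, EuclideanSpace.norm_single]

lemma inner_e0 (ω : E3) : ⟪e0, ω⟫ = ω 0 := by
  rw [e0, EuclideanSpace.inner_single_left]; simp

/-- The key constant. -/
def kap : ℝ := ∫ ω in Metric.sphere (0:E3) 1, |⟪e0, ω⟫| ∂μH[(2:ℝ)]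

lemma coord_continuous (i : Fin 3) : Continuous (fun ω : E3 => ω i) :=
  (continuous_apply i).comp (PiLp.continuous_ofLp 2 (fun _ : Fin 3 => ℝ))

lemma sphere_integrable (a : E3) :
    IntegrableOn (fun ω : E3 => |⟪a, ω⟫|) (Metric.sphere (0:E3) 1) μH[(2:ℝ)] := by
  apply Measure.integrableOn_of_bounded (M := ‖a‖) sphere_hm_lt_top.ne
  · exact ((continuous_const.inner continuous_id).abs).aestronglyMeasurable
  · apply (ae_restrict_iff' Metric.isClosed_sphere.measurableSet).mpr
    apply Filter.Eventually.of_forall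
    intro ω hω
    rw [mem_sphere_zero_iff_norm] at hω
    rw [Real.norm_eq_abs, abs_abs]
    calc |⟪a, ω⟫| ≤ ‖a‖ * ‖ω‖ := abs_real_inner_le_norm a ω
      _ = ‖a‖ := by rw [hω, mul_one]

lemma kap_pos : 0 < kap := by
  have hcap_meas : MeasurableSet (cap 0 1) := by
    apply MeasurableSet.inter Metric.isClosed_sphere.measurableSet
    exact (isClosed_le continuous_const (by simpa using (coord_continuous 0))).measurableSet
  have hsub : cap 0 1 ⊆ Metric.sphere (0:E3) 1 := Set.inter_subset_left
  have hint := sphere_integrable e0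
  have h1 : ∫ ω in cap 0 1, |⟪e0, ω⟫| ∂μH[(2:ℝ)] ≤ kap := by
    apply setIntegral_mono_set hint
    · exact Filter.Eventually.of_forall fun ω => abs_nonneg _
    · exact Filter.Eventually.of_forall hsub
  have h2 : (1/2 : ℝ) * (μH[(2:ℝ)] (cap 0 1)).toReal ≤ ∫ ω in cap 0 1, |⟪e0, ω⟫| ∂μH[(2:ℝ)] := by
    apply setIntegral_ge_of_const_le_real hcap_meas (cap_lt_top 0 1 (Or.inl rfl)).ne
    · rintro ω ⟨_, hω2⟩
      simp only [Set.mem_setOf_eq, one_mul] at hω2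
      rw [inner_e0]
      exact hω2.trans (le_abs_self _)
    · exact hint.mono_set hsub
  have h3 : 0 < (μH[(2:ℝ)] (cap 0 1)).toReal :=
    ENNReal.toReal_pos cap_pos.ne' (cap_lt_top 0 1 (Or.inl rfl)).ne
  calc (0:ℝ) < (1/2) * (μH[(2:ℝ)] (cap 0 1)).toReal := by positivity
    _ ≤ _ := h2.trans h1

/-- Rotation invariance: the sphere integral. -/
lemma sphere_inner_integral (a : E3) :
    ∫ ω in Metric.sphere (0:E3) 1, |⟪a, ω⟫| ∂μH[(2:ℝ)] = kap * ‖a‖ := by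
  rcases eq_or_ne a 0 with rfl | ha
  · simp
  · set b : E3 := ‖a‖⁻¹ • a with hb
    have hbn : ‖b‖ = 1 := by
      rw [hb, norm_smul, norm_inv, norm_norm, inv_mul_cancel₀ (norm_ne_zero_iff.mpr ha)]
    set R : E3 ≃ₗᵢ[ℝ] E3 := Submodule.reflection (Submodule.span ℝ {e0 - b})ᗮ with hR
    have hRe0 : R e0 = b := Submodule.reflection_sub (by rw [e0_norm, hbn])
    have hmp : MeasurePreserving R μH[(2:ℝ)] μH[(2:ℝ)] :=
      R.toIsometryEquiv.measurePreserving_hausdorffMeasure 2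
    have hpre : R ⁻¹' (Metric.sphere (0:E3) 1) = Metric.sphere (0:E3) 1 := by
      ext x
      simp [mem_sphere_zero_iff_norm, R.norm_map]
    have hemb : MeasurableEmbedding (R : E3 → E3) :=
      R.toHomeomorph.measurableEmbedding
    have key : ∫ ω in Metric.sphere (0:E3) 1, |⟪a, ω⟫| ∂μH[(2:ℝ)]
        = ∫ ω in Metric.sphere (0:E3) 1, |⟪a, R ω⟫| ∂μH[(2:ℝ)] := by
      rw [← hmp.setIntegral_preimage_emb hemb (fun ω => |⟪a, ω⟫|) (Metric.sphere (0:E3) 1), hpre]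
    rw [key]
    have hinner : ∀ ω : E3, ⟪a, R ω⟫ = ‖a‖ * ⟪e0, ω⟫ := by
      intro ω
      have ha' : a = ‖a‖ • b := by
        rw [hb, smul_smul, mul_inv_cancel₀ (norm_ne_zero_iff.mpr ha), one_smul]
      calc ⟪a, R ω⟫ = ⟪‖a‖ • b, R ω⟫ := by rw [← ha']
        _ = ‖a‖ * ⟪b, R ω⟫ := real_inner_smul_left _ _ _
        _ = ‖a‖ * ⟪R e0, R ω⟫ := by rw [hRe0]
        _ = ‖a‖ * ⟪e0, ω⟫ := by rw [R.inner_map_map]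
    calc ∫ ω in Metric.sphere (0:E3) 1, |⟪a, R ω⟫| ∂μH[(2:ℝ)]
        = ∫ ω in Metric.sphere (0:E3) 1, ‖a‖ * |⟪e0, ω⟫| ∂μH[(2:ℝ)] := by
          apply setIntegral_congr_fun Metric.isClosed_sphere.measurableSet
          intro ω _
          show |⟪a, R ω⟫| = ‖a‖ * |⟪e0, ω⟫|
          rw [hinner ω, abs_mul, abs_of_nonneg (norm_nonneg a)]
      _ = ‖a‖ * kap := by rw [integral_const_mul]; rfl
      _ = kap * ‖a‖ := mul_comm _ _

lemma gauss_integrable {b : ℝ} (hb : 0 < b) :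
    Integrable (fun u : E3 => Real.exp (-b * ‖u‖^2)) := by
  have h := (GaussianFourier.integrable_cexp_neg_mul_sq_norm_add
    (b := (b:ℂ)) (by simpa using hb) 0 (0:E3)).norm
  apply h.congr
  apply Filter.Eventually.of_forall
  intro u
  simp only [Complex.norm_exp]
  congr 1
  push_cast [← Complex.ofReal_pow]
  rw [show -(b:ℂ) * (↑(‖u‖^2) : ℂ) + 0 * ↑(inner ℝ (0:E3) u : ℝ) = ((-(b * ‖u‖^2) : ℝ) : ℂ) by push_cast; ring]
  rw [Complex.ofReal_re]
  ring

lemma maxw_nonneg (u : E3) : 0 ≤ Maxw u := by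
  rw [Maxw]
  positivity

lemma maxw_integrable : Integrable Maxw := by
  have : Maxw = fun u : E3 => (2*π)⁻¹ * Real.exp (-(1/2) * ‖u‖^2) := by
    funext u; rw [Maxw]; ring_nf
  rw [this]
  exact (gauss_integrable (by norm_num)).const_mul _

lemma maxw_continuous : Continuous Maxw := by
  apply Continuous.mul continuous_const
  exact (Continuous.neg ((continuous_norm.pow 2)) |>.div_const 2).rexp

/-- Key kernel integrability. -/
lemma kernel_integrable (v : E3) : Integrable (fun u : E3 => ‖v - u‖ * Maxw u) := by
  apply Integrable.mono' (g := fun u : E3 => (‖v‖ + 2) * ((2*π)⁻¹ * Real.exp (-(1/4) * ‖u‖^2)))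
  · exact ((gauss_integrable (by norm_num)).const_mul _).const_mul _
  · exact (((continuous_const.sub continuous_id).norm).mul maxw_continuous).aestronglyMeasurable
  · apply Filter.Eventually.of_forall
    intro u
    rw [Real.norm_eq_abs, abs_of_nonneg (mul_nonneg (norm_nonneg _) (maxw_nonneg u))]
    rw [Maxw]
    set r := ‖u‖ with hr
    have hr0 : 0 ≤ r := norm_nonneg u
    have h1 : ‖v - u‖ ≤ ‖v‖ + r := by
      calc ‖v - u‖ ≤ ‖v‖ + ‖u‖ := norm_sub_le v u
        _ = ‖v‖ + r := rfl
    have he : Real.exp (-r^2/2) = Real.exp (-(1/4) * r^2) * Real.exp (-(1/4) * r^2) := by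
      rw [← Real.exp_add]; ring_nf
    have he2 : Real.exp (-(1/4) * r^2) ≤ 1 := Real.exp_le_one_iff.mpr (by nlinarith)
    have he3 : r * Real.exp (-(1/4) * r^2) ≤ 2 := by
      have hx : 1 + r^2/4 ≤ Real.exp (r^2/4) := by
        have := Real.add_one_le_exp (r^2/4)
        linarith
      have hxpos : (0:ℝ) < Real.exp (r^2/4) := Real.exp_pos _
      have hinv : Real.exp (-(1/4) * r^2) = (Real.exp (r^2/4))⁻¹ := by
        rw [← Real.exp_neg]; ring_nf
      rw [hinv]
      rw [mul_inv_le_iff₀ hxpos]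
      nlinarith
    have hπ : (0:ℝ) < (2*π)⁻¹ := by positivity
    calc ‖v - u‖ * ((2*π)⁻¹ * Real.exp (-r^2/2))
        ≤ (‖v‖ + r) * ((2*π)⁻¹ * Real.exp (-r^2/2)) := by
          apply mul_le_mul_of_nonneg_right h1 (by positivity)
      _ = (2*π)⁻¹ * (‖v‖ * Real.exp (-r^2/2) + r * Real.exp (-r^2/2)) := by ring
      _ ≤ (2*π)⁻¹ * (‖v‖ * Real.exp (-(1/4) * r^2) + 2 * Real.exp (-(1/4) * r^2)) := by
          apply mul_le_mul_of_nonneg_left _ (le_of_lt hπ)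
          have hmono : Real.exp (-r^2/2) ≤ Real.exp (-(1/4) * r^2) :=
            Real.exp_le_exp.mpr (by nlinarith)
          have t1 : ‖v‖ * Real.exp (-r^2/2) ≤ ‖v‖ * Real.exp (-(1/4) * r^2) :=
            mul_le_mul_of_nonneg_left hmono (norm_nonneg v)
          have t2 : r * Real.exp (-r^2/2) ≤ 2 * Real.exp (-(1/4) * r^2) := by
            rw [he]
            calc r * (Real.exp (-(1/4) * r^2) * Real.exp (-(1/4) * r^2))
                = (r * Real.exp (-(1/4) * r^2)) * Real.exp (-(1/4) * r^2) := by ring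
              _ ≤ 2 * Real.exp (-(1/4) * r^2) := by
                  apply mul_le_mul_of_nonneg_right he3 (Real.exp_pos _).le
          linarith
      _ = (‖v‖ + 2) * ((2*π)⁻¹ * Real.exp (-(1/4) * ‖u‖^2)) := by rw [← hr]; ring

/-- The collision frequency in closed form. -/
lemma nuColl_eq (v : E3) : nuColl v = kap * ∫ u : E3, ‖v - u‖ * Maxw u := by
  rw [nuColl]
  have hpt : ∀ u : E3, (∫ ω in Metric.sphere (0 : E3) 1, |⟪v - u, ω⟫| * Maxw u ∂μH[2])
      = kap * (‖v - u‖ * Maxw u) := by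
    intro u
    rw [integral_mul_const, sphere_inner_integral (v - u)]
    ring
  rw [integral_congr_ae (Filter.Eventually.of_forall hpt)]
  exact integral_const_mul _ _

lemma kap_nonneg : 0 ≤ kap := kap_pos.le

def m0 : ℝ := ∫ u : E3, Maxw u

lemma m0_nonneg : 0 ≤ m0 := integral_nonneg maxw_nonneg

/-- nuColl is Lipschitz. -/
lemma nuColl_lipschitz : LipschitzWith ((kap * m0).toNNReal) nuColl := by
  apply LipschitzWith.of_dist_le_mul
  intro v v'
  rw [Real.dist_eq, dist_eq_norm, nuColl_eq, nuColl_eq, ← mul_sub, abs_mul,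
    abs_of_nonneg kap_nonneg]
  have hsub : (∫ u : E3, ‖v - u‖ * Maxw u) - (∫ u : E3, ‖v' - u‖ * Maxw u)
      = ∫ u : E3, (‖v - u‖ - ‖v' - u‖) * Maxw u := by
    rw [← integral_sub (kernel_integrable v) (kernel_integrable v')]
    congr 1; funext u; ring
  rw [hsub]
  have habs : |∫ u : E3, (‖v - u‖ - ‖v' - u‖) * Maxw u| ≤ ∫ u : E3, ‖v - v'‖ * Maxw u := by
    have hintabs : Integrable (fun u : E3 => |(‖v - u‖ - ‖v' - u‖) * Maxw u|) := by
      apply (((kernel_integrable v).sub (kernel_integrable v')).abs).congr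
      apply Filter.Eventually.of_forall
      intro u
      simp only [Pi.sub_apply]
      congr 1
      ring
    calc |∫ u : E3, (‖v - u‖ - ‖v' - u‖) * Maxw u| = ‖∫ u : E3, (‖v - u‖ - ‖v' - u‖) * Maxw u‖ :=
        (Real.norm_eq_abs _).symm
      _ ≤ ∫ u : E3, ‖(‖v - u‖ - ‖v' - u‖) * Maxw u‖ := norm_integral_le_integral_norm _
      _ ≤ ∫ u : E3, ‖v - v'‖ * Maxw u := by
          apply integral_mono (by simpa only [Real.norm_eq_abs] using hintabs)
            (maxw_integrable.const_mul _)
          intro u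
          show ‖(‖v - u‖ - ‖v' - u‖) * Maxw u‖ ≤ ‖v - v'‖ * Maxw u
          rw [Real.norm_eq_abs]
          rw [abs_mul, abs_of_nonneg (maxw_nonneg u)]
          apply mul_le_mul_of_nonneg_right _ (maxw_nonneg u)
          calc |‖v - u‖ - ‖v' - u‖| ≤ ‖(v - u) - (v' - u)‖ := abs_norm_sub_norm_le _ _
            _ = ‖v - v'‖ := by rw [sub_sub_sub_cancel_right]
  rw [integral_const_mul] at habs
  calc kap * |∫ u : E3, (‖v - u‖ - ‖v' - u‖) * Maxw u| ≤ kap * (‖v - v'‖ * m0) := by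
        apply mul_le_mul_of_nonneg_left _ kap_nonneg
        exact habs
    _ = ((kap * m0).toNNReal : ℝ) * ‖v - v'‖ := by
        rw [Real.coe_toNNReal _ (mul_nonneg kap_nonneg m0_nonneg)]; ring

def c0 : ℝ := (2*π)⁻¹ * Real.exp (-(9/2)) * (volume (Metric.ball (0:E3) 1)).toReal

lemma c0_pos : 0 < c0 := by
  have h1 : 0 < (volume (Metric.ball (0:E3) 1)).toReal :=
    ENNReal.toReal_pos (Metric.measure_ball_pos volume 0 (by norm_num)).ne'
      (measure_ball_lt_top).ne
  rw [c0]
  positivity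

lemma J_lower (v : E3) : (1 + ‖v‖) * c0 ≤ ∫ u : E3, ‖v - u‖ * Maxw u := by
  obtain ⟨n, hnn, hnv⟩ : ∃ n : E3, ‖n‖ = 1 ∧ ⟪n, v⟫ = ‖v‖ := by
    rcases eq_or_ne v 0 with hv | hv
    · exact ⟨e0, e0_norm, by simp [hv]⟩
    · refine ⟨‖v‖⁻¹ • v, ?_, ?_⟩
      · rw [norm_smul, norm_inv, norm_norm, inv_mul_cancel₀ (norm_ne_zero_iff.mpr hv)]
      · rw [real_inner_smul_left, real_inner_self_eq_norm_sq]
        have : ‖v‖ ≠ 0 := norm_ne_zero_iff.mpr hv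
        field_simp
  set B : Set E3 := Metric.ball (-(2:ℝ) • n) 1 with hB
  have hBvol : volume B = volume (Metric.ball (0:E3) 1) := Measure.addHaar_ball_center volume _ 1
  have hkey : ∀ u ∈ B, (1 + ‖v‖) * ((2*π)⁻¹ * Real.exp (-(9/2))) ≤ ‖v - u‖ * Maxw u := by
    intro u hu
    rw [hB, Metric.mem_ball, dist_eq_norm] at hu
    have hu2 : ‖u + (2:ℝ) • n‖ < 1 := by
      rw [show u + (2:ℝ) • n = u - (-(2:ℝ) • n) by module]
      exact hu
    have hinner_u : ⟪n, u⟫ ≤ -1 := by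
      have h1 : ⟪n, u + (2:ℝ) • n⟫ = ⟪n, u⟫ + 2 := by
        rw [inner_add_right, real_inner_smul_right, real_inner_self_eq_norm_sq, hnn]
        norm_num
      have h2 : ⟪n, u + (2:ℝ) • n⟫ ≤ ‖u + (2:ℝ) • n‖ := by
        calc ⟪n, u + (2:ℝ) • n⟫ ≤ ‖n‖ * ‖u + (2:ℝ) • n‖ := real_inner_le_norm _ _
          _ = ‖u + (2:ℝ) • n‖ := by rw [hnn, one_mul]
      linarith
    have hdist : 1 + ‖v‖ ≤ ‖v - u‖ := by
      have h3 : ⟪n, v - u⟫ ≤ ‖v - u‖ := by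
        calc ⟪n, v - u⟫ ≤ ‖n‖ * ‖v - u‖ := real_inner_le_norm _ _
          _ = ‖v - u‖ := by rw [hnn, one_mul]
      have h4 : ⟪n, v - u⟫ = ‖v‖ - ⟪n, u⟫ := by rw [inner_sub_right, hnv]
      linarith
    have hunorm : ‖u‖ ≤ 3 := by
      calc ‖u‖ = ‖(u + (2:ℝ) • n) - (2:ℝ) • n‖ := by congr 1; module
        _ ≤ ‖u + (2:ℝ) • n‖ + ‖(2:ℝ) • n‖ := norm_sub_le _ _
        _ ≤ 1 + 2 := by
            apply add_le_add hu2.le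
            rw [norm_smul, hnn]
            norm_num
        _ = 3 := by norm_num
    have hmaxw : (2*π)⁻¹ * Real.exp (-(9/2)) ≤ Maxw u := by
      rw [Maxw]
      apply mul_le_mul_of_nonneg_left _ (by positivity)
      apply Real.exp_le_exp.mpr
      nlinarith [norm_nonneg u]
    exact mul_le_mul hdist hmaxw (by positivity) (norm_nonneg _)
  have hmeas : MeasurableSet B := Metric.isOpen_ball.measurableSet
  have hne : volume B ≠ ∞ := by rw [hBvol]; exact measure_ball_lt_top.ne
  calc (1 + ‖v‖) * c0
      = ((1 + ‖v‖) * ((2*π)⁻¹ * Real.exp (-(9/2)))) * (volume B).toReal := by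
        rw [hBvol, c0]; ring
    _ ≤ ∫ u in B, ‖v - u‖ * Maxw u := by
        apply setIntegral_ge_of_const_le_real hmeas hne hkey
        exact (kernel_integrable v).integrableOn
    _ ≤ ∫ u : E3, ‖v - u‖ * Maxw u := by
        apply setIntegral_le_integral (kernel_integrable v)
        exact Filter.Eventually.of_forall fun u => mul_nonneg (norm_nonneg _) (maxw_nonneg u)

theorem stmt10' :
    (∃ c > (0:ℝ), ∀ v : E3, c * Real.sqrt (1 + ‖v‖ ^ 2) ≤ nuColl v) ∧
    ∃ C : ℝ, ∀ v : E3, ‖gradient nuColl v‖ ≤ C := by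
  constructor
  · refine ⟨kap * c0, mul_pos kap_pos c0_pos, ?_⟩
    intro v
    have h1 : Real.sqrt (1 + ‖v‖^2) ≤ 1 + ‖v‖ := by
      rw [show (1:ℝ) + ‖v‖ = Real.sqrt ((1 + ‖v‖)^2) by
        rw [Real.sqrt_sq (by positivity)]]
      apply Real.sqrt_le_sqrt
      nlinarith [norm_nonneg v]
    calc kap * c0 * Real.sqrt (1 + ‖v‖^2) ≤ kap * c0 * (1 + ‖v‖) := by
          apply mul_le_mul_of_nonneg_left h1 (mul_pos kap_pos c0_pos).le
      _ = kap * ((1 + ‖v‖) * c0) := by ring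
      _ ≤ kap * ∫ u : E3, ‖v - u‖ * Maxw u := by
          apply mul_le_mul_of_nonneg_left (J_lower v) kap_nonneg
      _ = nuColl v := (nuColl_eq v).symm
  · refine ⟨((kap * m0).toNNReal : ℝ), fun v => ?_⟩
    have h1 : ‖gradient nuColl v‖ = ‖fderiv ℝ nuColl v‖ := by
      rw [gradient]
      exact LinearIsometryEquiv.norm_map _ _
    rw [h1]
    exact norm_fderiv_le_of_lipschitz ℝ nuColl_lipschitz

end NuAux

theorem stmt10 :
    (∃ c > (0:ℝ), ∀ v : E3, c * Real.sqrt (1 + ‖v‖ ^ 2) ≤ nuColl v) ∧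
    ∃ C : ℝ, ∀ v : E3, ‖gradient nuColl v‖ ≤ C :=
  NuAux.stmt10'
end
end
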